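/- arXiv:1807.11897 — 3 statements merged into one kernel-verified Lean document; each statement's English description precedes it below -/
import Mathlib

section
/- Let G₁ be a simple graph on n ≥ 2 vertices with Laplacian matrix Q₁, let p ≥ 0, and let Q = [[Q₁ + np·I, −pJ], [−pJ, nI − J − Q₁ + np·I]] be the supra-Laplacian of G₁ coupled to its complementary graph via the n-to-n interconnection B = pJ. Then the second-smallest eigenvalue of Q equals λ₂(Q) = min(2np, np + λ₂(Q₁), np + n − λ_max(Q₁)), where λ_max(Q₁) is the largest eigenvalue of Q₁. In particular, λ₂(Q) = 2np if and only if np ≤ min(λ₂(Q₁), n − λ_max(Q₁)), so the structural transition occurs at p* = min(λ₂(Q₁)/n, 1 − λ_max(Q₁)/n). -/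
open Matrix

/-- The eigenvalues of a Hermitian matrix, sorted in increasing order (as a list). -/
noncomputable def sortedEigs {ι : Type*} [Fintype ι] [DecidableEq ι]
    {A : Matrix ι ι ℝ} (hA : A.IsHermitian) : List ℝ :=
  Multiset.sort (Finset.univ.val.map hA.eigenvalues) (· ≤ ·)

/-- The `n×n` all-ones matrix `J = u uᵀ`. -/
def allOnes (n : ℕ) : Matrix (Fin n) (Fin n) ℝ := Matrix.of fun _ _ => 1

open Polynomial

section CharpolyTools
variable {ι : Type*} [Fintype ι] [DecidableEq ι]

private lemma my_charpoly_diagonal (d : ι → ℝ) :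
    (diagonal d).charpoly = ∏ i, (X - C (d i)) := by
  have h : charmatrix (diagonal d) = diagonal (fun i => (X : ℝ[X]) - C (d i)) := by
    ext i j
    by_cases hij : i = j
    · subst hij; simp [charmatrix_apply_eq]
    · simp [charmatrix_apply_ne _ _ _ hij, diagonal_apply_ne _ hij]
  rw [Matrix.charpoly, h, det_diagonal]

private lemma my_charpoly_roots_diagonal (d : ι → ℝ) :
    (diagonal d).charpoly.roots = Finset.univ.val.map d := by
  rw [my_charpoly_diagonal]
  rw [show (∏ i, (X - C (d i))) = ((Finset.univ.val.map d).map (fun a => X - C a)).prod by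
    rw [Multiset.map_map]; rfl]
  rw [roots_multiset_prod_X_sub_C]

private lemma my_charpoly_conj (S T M : Matrix ι ι ℝ) (h1 : S * T = 1) (h2 : T * S = 1) :
    (S * M * T).charpoly = M.charpoly := by
  have hmap : ∀ (A B : Matrix ι ι ℝ), (A * B).map (C : ℝ →+* ℝ[X]) = A.map C * B.map C := by
    intro A B; exact Matrix.map_mul
  have h1' : S.map (C : ℝ →+* ℝ[X]) * T.map C = 1 := by
    rw [← hmap, h1]; simp
  have key : charmatrix (S * M * T) = S.map (C : ℝ →+* ℝ[X]) * charmatrix M * T.map C := by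
    unfold charmatrix
    rw [Matrix.mul_sub, Matrix.sub_mul]
    congr 1
    · calc (scalar ι) (X : ℝ[X]) = S.map (C : ℝ →+* ℝ[X]) * T.map C * (scalar ι) X := by
            rw [h1', one_mul]
        _ = S.map (C : ℝ →+* ℝ[X]) * (scalar ι) X * T.map C := by
            rw [mul_assoc, mul_assoc, (scalar_commute (X : ℝ[X]) (Commute.all _) (T.map C)).symm]
    · simp only [RingHom.mapMatrix_apply, hmap]
  have hdet : (S.map (C : ℝ →+* ℝ[X])).det * (T.map (C : ℝ →+* ℝ[X])).det = 1 := by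
    rw [← det_mul, h1', det_one]
  rw [Matrix.charpoly, key, det_mul, det_mul, Matrix.charpoly]
  calc (S.map (C : ℝ →+* ℝ[X])).det * M.charmatrix.det * (T.map (C : ℝ →+* ℝ[X])).det
      = (S.map (C : ℝ →+* ℝ[X])).det * (T.map (C : ℝ →+* ℝ[X])).det * M.charmatrix.det := by ring
    _ = M.charmatrix.det := by rw [hdet, one_mul]

private lemma eig_multiset_eq_roots {A : Matrix ι ι ℝ} (hA : A.IsHermitian) :
    Finset.univ.val.map hA.eigenvalues = A.charpoly.roots := by
  have hsp := hA.spectral_theorem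
  have hU1 : (hA.eigenvectorUnitary : Matrix ι ι ℝ) * (star hA.eigenvectorUnitary : Matrix ι ι ℝ) = 1 := by
    exact_mod_cast (Matrix.mem_unitaryGroup_iff).mp hA.eigenvectorUnitary.2
  have hU2 : (star hA.eigenvectorUnitary : Matrix ι ι ℝ) * (hA.eigenvectorUnitary : Matrix ι ι ℝ) = 1 := by
    exact_mod_cast (Matrix.mem_unitaryGroup_iff').mp hA.eigenvectorUnitary.2
  have hch : A.charpoly = (diagonal hA.eigenvalues).charpoly := by
    conv_lhs => rw [hsp]
    rw [show (RCLike.ofReal ∘ hA.eigenvalues : ι → ℝ) = hA.eigenvalues from rfl]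
    exact my_charpoly_conj _ _ _ hU1 hU2
  rw [hch, my_charpoly_roots_diagonal]
end CharpolyTools

section SortTools

private lemma sort_cons_of_le (m : Multiset ℝ) (a : ℝ) (h : ∀ x ∈ m, a ≤ x) :
    Multiset.sort (a ::ₘ m) (· ≤ ·) = a :: Multiset.sort m (· ≤ ·) := by
  exact Multiset.sort_cons a m (· ≤ ·) h

private lemma sort_head_min (m : Multiset ℝ) (hm : m ≠ 0) :
    (Multiset.sort m (· ≤ ·))[0]! ∈ m ∧ ∀ x ∈ m, (Multiset.sort m (· ≤ ·))[0]! ≤ x := by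
  rcases hl : Multiset.sort m (· ≤ ·) with _ | ⟨b, t⟩
  · exfalso
    apply hm
    have h2 := Multiset.sort_eq m (· ≤ ·)
    rw [hl] at h2
    simpa using h2.symm
  · have hsorted := Multiset.pairwise_sort m (· ≤ ·)
    rw [hl, List.pairwise_cons] at hsorted
    have hb : (b :: t)[0]! = b := by simp
    rw [hb]
    constructor
    · rw [← Multiset.mem_sort (· ≤ ·), hl]; exact List.mem_cons_self
    · intro x hx
      rw [← Multiset.mem_sort (· ≤ ·), hl, List.mem_cons] at hx
      rcases hx with rfl | hx
      · exact le_rfl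
      · exact hsorted.1 x hx

private lemma sort_last_max (m : Multiset ℝ) (k : ℕ) (hk : k + 1 = Multiset.card m) :
    (Multiset.sort m (· ≤ ·))[k]! ∈ m ∧ ∀ x ∈ m, x ≤ (Multiset.sort m (· ≤ ·))[k]! := by
  have hlen : (Multiset.sort m (· ≤ ·)).length = Multiset.card m := Multiset.length_sort _
  have hklt : k < (Multiset.sort m (· ≤ ·)).length := by omega
  rw [getElem!_pos (Multiset.sort m (· ≤ ·)) k hklt]
  constructor
  · rw [← Multiset.mem_sort (· ≤ ·)]
    exact List.getElem_mem hklt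
  · intro x hx
    rw [← Multiset.mem_sort (· ≤ ·)] at hx
    obtain ⟨j, hj, hjx⟩ := List.mem_iff_getElem.mp hx
    have hjk : j ≤ k := by omega
    rw [← hjx]
    have := (Multiset.pairwise_sort m (· ≤ ·)).rel_get_of_le
      (a := ⟨j, hj⟩) (b := ⟨k, hklt⟩) (by simpa using hjk)
    simpa [List.get_eq_getElem] using this

end SortTools

section CoreMatrices
variable {n : ℕ} (w μ : Fin n → ℝ) (i₀ : Fin n)

private noncomputable def Emat (i₀ : Fin n) : Matrix (Fin n) (Fin n) ℝ :=
  diagonal (fun i => if i = i₀ then (1:ℝ) else 0)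

private noncomputable def Rmat (w : Fin n → ℝ) (i₀ : Fin n) (n' : ℝ) : Matrix (Fin n) (Fin n) ℝ :=
  Matrix.of fun i j => if j = i₀ then w i else (if i = j then 1 else 0) - w i * w j / n'

private lemma Emat_mul_Emat : Emat i₀ * Emat i₀ = Emat i₀ := by
  have h : (fun i => (if i = i₀ then (1:ℝ) else 0) * (if i = i₀ then (1:ℝ) else 0))
      = fun i => if i = i₀ then (1:ℝ) else 0 := by
    funext i; by_cases h : i = i₀ <;> simp [h]
  rw [Emat, diagonal_mul_diagonal, h]

private lemma Dmat_mul_Emat (hμ0 : μ i₀ = 0) : diagonal μ * Emat i₀ = 0 := by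
  rw [Emat, diagonal_mul_diagonal]
  ext i j
  by_cases h : i = j
  · subst h; by_cases h2 : i = i₀ <;> simp [h2, hμ0]
  · simp [diagonal_apply_ne _ h]

private lemma Emat_mul_Dmat (hμ0 : μ i₀ = 0) : Emat i₀ * diagonal μ = 0 := by
  rw [Emat, diagonal_mul_diagonal]
  ext i j
  by_cases h : i = j
  · subst h; by_cases h2 : i = i₀ <;> simp [h2, hμ0]
  · simp [diagonal_apply_ne _ h]

private lemma Dmat_mul_Rmat (hμw : ∀ i, μ i * w i = 0) (hμ0 : μ i₀ = 0) :
    diagonal μ * Rmat w i₀ (n:ℝ) = Rmat w i₀ (n:ℝ) * diagonal μ := by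
  ext i j
  rw [diagonal_mul, mul_diagonal]
  simp only [Rmat, of_apply]
  by_cases hj : j = i₀
  · subst hj
    simp [hμ0, hμw i]
  · rw [if_neg hj]
    by_cases hij : i = j
    · subst hij; ring
    · rw [if_neg hij]
      linear_combination (-(w j)/(n:ℝ)) * hμw i + (w i/(n:ℝ)) * hμw j

private lemma Rmat_mul_Emat : Rmat w i₀ (n:ℝ) * Emat i₀ =
    Matrix.of fun i j => if j = i₀ then w i else 0 := by
  ext i j
  rw [Emat, mul_diagonal]
  by_cases hj : j = i₀ <;> simp [Rmat, hj]

private lemma Rmat_det_isUnit (hn : 0 < n) (hw0 : w i₀ ≠ 0) : IsUnit (Rmat w i₀ (n:ℝ)).det := by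
  have hne : (Rmat w i₀ (n:ℝ)).det ≠ 0 := by
    rw [Ne, ← Matrix.exists_mulVec_eq_zero_iff]
    rintro ⟨x, hx, hmul⟩
    apply hx
    set c : ℝ := x i₀ - (∑ j ∈ Finset.univ.erase i₀, w j * x j) / n with hc
    have key : ∀ i, (if i = i₀ then 0 else x i) + w i * c = 0 := by
      intro i
      have h0 : ∑ j, Rmat w i₀ (n:ℝ) i j * x j = 0 := by
        have := congrFun hmul i
        rwa [Matrix.mulVec, dotProduct, Pi.zero_apply] at this
      rw [← Finset.sum_erase_add _ _ (Finset.mem_univ i₀)] at h0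
      have h1 : Rmat w i₀ (n:ℝ) i i₀ * x i₀ = w i * x i₀ := by
        simp [Rmat]
      have h2 : ∑ j ∈ Finset.univ.erase i₀, Rmat w i₀ (n:ℝ) i j * x j
          = (∑ j ∈ Finset.univ.erase i₀, (if i = j then 1 else 0) * x j)
            - (w i / n) * ∑ j ∈ Finset.univ.erase i₀, w j * x j := by
        rw [Finset.mul_sum, ← Finset.sum_sub_distrib]
        apply Finset.sum_congr rfl
        intro j hj
        rw [Rmat]
        simp only [of_apply]
        rw [if_neg (Finset.ne_of_mem_erase hj)]
        ring
      have h3 : (∑ j ∈ Finset.univ.erase i₀, (if i = j then 1 else 0) * x j)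
          = if i = i₀ then 0 else x i := by
        by_cases hi : i = i₀
        · subst hi
          rw [if_pos rfl]
          apply Finset.sum_eq_zero
          intro j hj
          rw [if_neg (fun h => (Finset.ne_of_mem_erase hj) h.symm), zero_mul]
        · rw [if_neg hi]
          rw [Finset.sum_eq_single i]
          · simp
          · intro j _ hji; rw [if_neg (fun h => hji h.symm), zero_mul]
          · intro hmem
            exact absurd (Finset.mem_erase.mpr ⟨hi, Finset.mem_univ i⟩) hmem
      rw [h1, h2, h3] at h0
      rw [hc]
      by_cases hi : i = i₀
      · rw [if_pos hi] at h0 ⊢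
        linear_combination h0
      · rw [if_neg hi] at h0 ⊢
        linear_combination h0
    have hceq : c = 0 := by
      have := key i₀
      rw [if_pos rfl, zero_add] at this
      exact (mul_eq_zero.mp this).resolve_left hw0
    funext i
    simp only [Pi.zero_apply]
    by_cases hi : i = i₀
    · have hs : (∑ j ∈ Finset.univ.erase i₀, w j * x j) = 0 := by
        apply Finset.sum_eq_zero
        intro j hj
        have hkey := key j
        rw [if_neg (Finset.mem_erase.mp hj).1, hceq, mul_zero, add_zero] at hkey
        rw [hkey, mul_zero]
      have h5 := hceq
      rw [hc, hs, zero_div, sub_zero] at h5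
      rw [hi]; exact h5
    · have hkey := key i
      rw [if_neg hi, hceq, mul_zero, add_zero] at hkey
      exact hkey
  exact hne.isUnit

end CoreMatrices

section GraphFacts
variable {n : ℕ} (G₁ : SimpleGraph (Fin n)) [DecidableRel G₁.Adj]

lemma compl_lap_eq (hn : 1 ≤ n) :
    (G₁ᶜ).lapMatrix ℝ = (n:ℝ) • 1 - allOnes n - G₁.lapMatrix ℝ := by
  ext i j
  by_cases hij : i = j
  · subst hij
    simp only [SimpleGraph.lapMatrix, SimpleGraph.degMatrix, SimpleGraph.adjMatrix,
      Matrix.sub_apply, Matrix.of_apply, Matrix.smul_apply, Matrix.one_apply_eq, allOnes,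
      Matrix.diagonal_apply_eq, SimpleGraph.adjMatrix_apply]
    rw [if_neg (SimpleGraph.irrefl _), if_neg (SimpleGraph.irrefl _)]
    have hd := SimpleGraph.degree_compl (G := G₁) (v := i)
    have hlt : G₁.degree i < n := by
      simpa using G₁.degree_lt_card_verts i
    rw [hd]
    have hcard : (Fintype.card (Fin n)) = n := by simp
    rw [hcard]
    rw [Nat.cast_sub (by omega : G₁.degree i ≤ n - 1), Nat.cast_sub hn]
    push_cast
    simp only [smul_eq_mul]
    ring
  · simp only [SimpleGraph.lapMatrix, SimpleGraph.degMatrix, Matrix.sub_apply,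
      Matrix.of_apply, Matrix.smul_apply, allOnes, Matrix.diagonal_apply_ne _ hij,
      Matrix.one_apply_ne hij, SimpleGraph.adjMatrix_apply]
    by_cases hadj : G₁.Adj i j
    · rw [if_pos hadj, if_neg (by simp [SimpleGraph.compl_adj, hadj])]
      simp
    · rw [if_neg hadj, if_pos (by simp [SimpleGraph.compl_adj, hij, hadj])]
      simp

lemma allOnes_posSemidef : (allOnes n).PosSemidef := by
  refine Matrix.PosSemidef.of_dotProduct_mulVec_nonneg ?_ ?_
  · ext i j; simp [allOnes, Matrix.conjTranspose_apply, IsHermitian]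
  · intro x
    have : star x ⬝ᵥ (allOnes n *ᵥ x) = (∑ i, x i) * (∑ i, x i) := by
      simp [dotProduct, allOnes, Matrix.mulVec, Finset.sum_mul, mul_comm]
    rw [this]
    exact mul_self_nonneg _

lemma lap_eig_bounds (hn : 1 ≤ n) (hQ₁ : (G₁.lapMatrix ℝ).IsHermitian) (i : Fin n) :
    0 ≤ hQ₁.eigenvalues i ∧ hQ₁.eigenvalues i ≤ n := by
  have hPSD : (G₁.lapMatrix ℝ).PosSemidef := SimpleGraph.posSemidef_lapMatrix ℝ G₁
  have hc : ((n:ℝ) • (1 : Matrix (Fin n) (Fin n) ℝ) - allOnes n - G₁.lapMatrix ℝ).PosSemidef := by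
    rw [← compl_lap_eq G₁ hn]; exact SimpleGraph.posSemidef_lapMatrix ℝ G₁ᶜ
  have hsum : ((n:ℝ) • (1 : Matrix (Fin n) (Fin n) ℝ) - G₁.lapMatrix ℝ).PosSemidef := by
    have : (n:ℝ) • (1 : Matrix (Fin n) (Fin n) ℝ) - G₁.lapMatrix ℝ
        = ((n:ℝ) • 1 - allOnes n - G₁.lapMatrix ℝ) + allOnes n := by abel
    rw [this]; exact hc.add (allOnes_posSemidef)
  set v : Fin n → ℝ := ⇑(hQ₁.eigenvectorBasis i) with hv
  have hvv : v ⬝ᵥ v = 1 := by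
    have h1 : ‖hQ₁.eigenvectorBasis i‖ = 1 := hQ₁.eigenvectorBasis.orthonormal.1 i
    have h2 : (inner ℝ (hQ₁.eigenvectorBasis i) (hQ₁.eigenvectorBasis i) : ℝ) = 1 := by
      rw [real_inner_self_eq_norm_sq, h1]; norm_num
    rw [← h2, PiLp.inner_apply]
    simp [dotProduct, v, mul_comm, sq]
  have hmv : G₁.lapMatrix ℝ *ᵥ v = hQ₁.eigenvalues i • v := hQ₁.mulVec_eigenvectorBasis i
  have hQvv : v ⬝ᵥ (G₁.lapMatrix ℝ *ᵥ v) = hQ₁.eigenvalues i := by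
    rw [hmv, dotProduct_smul, hvv]; simp
  constructor
  · have h0 := hPSD.dotProduct_mulVec_nonneg v
    rwa [star_trivial, hQvv] at h0
  · have h0 := hsum.dotProduct_mulVec_nonneg v
    rw [star_trivial, sub_mulVec, dotProduct_sub, hQvv, smul_mulVec, one_mulVec,
      dotProduct_smul, hvv] at h0
    simp only [smul_eq_mul, mul_one] at h0
    linarith

end GraphFacts

section KeyLemma

private lemma key_multiset
    (n : ℕ) (hn : 2 ≤ n) (p : ℝ)
    (G₁ : SimpleGraph (Fin n)) [DecidableRel G₁.Adj]
    (hQ₁ : (G₁.lapMatrix ℝ).IsHermitian)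
    (Q : Matrix (Fin n ⊕ Fin n) (Fin n ⊕ Fin n) ℝ)
    (hQdef : Q = Matrix.fromBlocks
      (G₁.lapMatrix ℝ + ((n:ℝ) * p) • 1) (-(p • allOnes n))
      (-(p • allOnes n)) ((n:ℝ) • 1 - allOnes n - G₁.lapMatrix ℝ + ((n:ℝ) * p) • 1))
    (hQH : Q.IsHermitian) :
    ∃ i₀ : Fin n, hQ₁.eigenvalues i₀ = 0 ∧
      Finset.univ.val.map hQH.eigenvalues =
        0 ::ₘ (2 * ((n:ℝ) * p)) ::ₘ
          (((Finset.univ.val.erase i₀).map (fun i => (n:ℝ)*p + hQ₁.eigenvalues i)) +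
           ((Finset.univ.val.erase i₀).map (fun i => (n:ℝ)*p + (n:ℝ) - hQ₁.eigenvalues i))) := by
  classical
  have hnR : (0:ℝ) < n := by
    have : (2:ℝ) ≤ n := by exact_mod_cast hn
    linarith
  set Q₁ := G₁.lapMatrix ℝ with hQ₁def
  set μ := hQ₁.eigenvalues with hμdef
  set V : Matrix (Fin n) (Fin n) ℝ := (hQ₁.eigenvectorUnitary : Matrix (Fin n) (Fin n) ℝ) with hVdef
  have hV1 : V * star V = 1 := by
    exact_mod_cast (Matrix.mem_unitaryGroup_iff).mp hQ₁.eigenvectorUnitary.2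
  have hV2 : star V * V = 1 := by
    exact_mod_cast (Matrix.mem_unitaryGroup_iff').mp hQ₁.eigenvectorUnitary.2
  have hspec : star V * Q₁ * V = diagonal μ := by
    have h := hQ₁.conjStarAlgAut_star_eigenvectorUnitary
    rw [Unitary.conjStarAlgAut_star_apply] at h
    rwa [show (RCLike.ofReal ∘ hQ₁.eigenvalues : Fin n → ℝ) = μ from rfl] at h
  have hQV : Q₁ * V = V * diagonal μ := by
    have h := congrArg (fun M => V * M) hspec
    simp only [← Matrix.mul_assoc] at h
    rwa [hV1, one_mul] at h
  set w : Fin n → ℝ := star V *ᵥ (fun _ => (1:ℝ)) with hwdef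
  have hVw : V *ᵥ w = (fun _ => (1:ℝ)) := by
    rw [hwdef, mulVec_mulVec, hV1, one_mulVec]
  have hQu : Q₁ *ᵥ (fun _ => (1:ℝ)) = 0 := G₁.lapMatrix_mulVec_const_eq_zero
  have hDw : diagonal μ *ᵥ w = 0 := by
    rw [← hspec, ← mulVec_mulVec, hVw, ← mulVec_mulVec, hQu, mulVec_zero]
  have hμw : ∀ i, μ i * w i = 0 := by
    intro i
    have h := congrFun hDw i
    rwa [mulVec_diagonal, Pi.zero_apply] at h
  have hsV : star V = Vᵀ := by
    ext i j
    simp [Matrix.star_apply]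
  have hww : w ⬝ᵥ w = (n:ℝ) := by
    rw [hwdef, hsV, dotProduct_mulVec, vecMul_transpose, mulVec_mulVec, ← hsV, hV1, one_mulVec]
    simp [dotProduct]
  obtain ⟨i₀, hw0⟩ : ∃ i, w i ≠ 0 := by
    by_contra h
    push_neg at h
    have h0 : (n:ℝ) = 0 := by
      rw [← hww]; simp [dotProduct, h]
    linarith
  have hμ0 : μ i₀ = 0 := by
    rcases mul_eq_zero.mp (hμw i₀) with h | h
    · exact h
    · exact absurd h hw0
  set E := Emat i₀ with hEdef
  set R := Rmat w i₀ (n:ℝ) with hRdef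
  set W := V * R with hWdef
  have hEE : E * E = E := Emat_mul_Emat i₀
  have hDE : diagonal μ * E = 0 := Dmat_mul_Emat μ i₀ hμ0
  have hED : E * diagonal μ = 0 := Emat_mul_Dmat μ i₀ hμ0
  have hDR : diagonal μ * R = R * diagonal μ := Dmat_mul_Rmat w μ i₀ hμw hμ0
  have hQW : Q₁ * W = W * diagonal μ := by
    rw [hWdef, ← Matrix.mul_assoc, hQV, Matrix.mul_assoc, hDR, ← Matrix.mul_assoc]
  set Y := W * E with hYdef
  have hYD : Y * diagonal μ = 0 := by
    rw [hYdef, Matrix.mul_assoc, hED, Matrix.mul_zero]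
  have hYE : Y * E = Y := by
    rw [hYdef, Matrix.mul_assoc, hEE]
  have hQY : Q₁ * Y = 0 := by
    rw [hYdef, ← Matrix.mul_assoc, hQW, Matrix.mul_assoc, hDE, Matrix.mul_zero]
  have hYentry : Y = Matrix.of (fun i j => if j = i₀ then (1:ℝ) else 0) := by
    rw [hYdef, hWdef, Matrix.mul_assoc, hRdef, hEdef, Rmat_mul_Emat]
    ext i j
    rw [mul_apply]
    by_cases hj : j = i₀
    · subst hj
      simp only [of_apply, if_pos rfl]
      have h := congrFun hVw i
      rw [Matrix.mulVec, dotProduct] at h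
      simpa using h
    · simp [hj]
  have hJW : allOnes n * W = (n:ℝ) • Y := by
    have hJV : allOnes n * V = Matrix.of (fun i k => w k) := by
      ext i k
      rw [mul_apply]
      simp only [allOnes, of_apply, one_mul]
      rw [hwdef, Matrix.mulVec, dotProduct, hsV]
      simp [Matrix.transpose_apply]
    rw [hWdef, ← Matrix.mul_assoc, hJV]
    rw [hYentry]
    ext i j
    rw [mul_apply]
    simp only [of_apply, Matrix.smul_apply, smul_eq_mul]
    by_cases hj : j = i₀
    · rw [hj, if_pos rfl, mul_one]
      have heq : ∀ k, w k * R k i₀ = w k * w k := by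
        intro k; rw [hRdef]; simp [Rmat]
      rw [Finset.sum_congr rfl (fun k _ => heq k)]
      exact hww
    · rw [if_neg hj, mul_zero]
      have heq : ∀ k, w k * R k j = w k * (if k = j then 1 else 0) - (w k * w k) * (w j / n) := by
        intro k; rw [hRdef]; simp only [Rmat, of_apply, if_neg hj]; ring
      rw [Finset.sum_congr rfl (fun k _ => heq k), Finset.sum_sub_distrib, ← Finset.sum_mul]
      rw [show (∑ k, w k * w k) = (n:ℝ) from hww]
      have hsum1 : (∑ k, w k * (if k = j then 1 else 0)) = w j := by
        rw [Finset.sum_congr rfl (fun k _ => by rw [mul_ite, mul_one, mul_zero])]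
        simp
      rw [hsum1]
      field_simp
      ring
  have hJY : allOnes n * Y = (n:ℝ) • Y := by
    rw [hYdef, ← Matrix.mul_assoc, hJW, Matrix.smul_mul, hYE]
  set d1 : Fin n → ℝ := fun i => if i = i₀ then 0 else (n:ℝ)*p + μ i with hd1def
  set d2 : Fin n → ℝ := fun i => if i = i₀ then 2*((n:ℝ)*p) else (n:ℝ)*p + (n:ℝ) - μ i with hd2def
  have hDg1 : diagonal d1 = ((n:ℝ)*p) • 1 + diagonal μ - ((n:ℝ)*p) • E := by
    rw [hd1def, hEdef, Emat]
    ext i j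
    rcases eq_or_ne i j with rfl | hij
    · rcases eq_or_ne i i₀ with rfl | hi
      · simp [hμ0]
      · simp [hi]
    · simp [diagonal_apply_ne _ hij, Matrix.one_apply_ne hij]
  have hDg2 : diagonal d2 = ((n:ℝ)*p + (n:ℝ)) • 1 - diagonal μ + ((n:ℝ)*p - (n:ℝ)) • E := by
    rw [hd2def, hEdef, Emat]
    ext i j
    rcases eq_or_ne i j with rfl | hij
    · rcases eq_or_ne i i₀ with rfl | hi
      · simp [hμ0]; ring
      · simp [hi]
    · simp [diagonal_apply_ne _ hij, Matrix.one_apply_ne hij]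
  set S : Matrix (Fin n ⊕ Fin n) (Fin n ⊕ Fin n) ℝ :=
    fromBlocks W Y Y (W * (1 - (2:ℝ) • E)) with hSdef
  have hW22 : W * (1 - (2:ℝ) • E) = W - (2:ℝ) • Y := by
    rw [Matrix.mul_sub, Matrix.mul_one, mul_smul_comm, ← hYdef]
  have hQS : Q * S = S * diagonal (Sum.elim d1 d2) := by
    rw [hQdef, hSdef, ← fromBlocks_diagonal, fromBlocks_multiply, fromBlocks_multiply]
    refine Matrix.fromBlocks_inj.mpr ⟨?_, ?_, ?_, ?_⟩ <;>
    · simp only [hW22, hDg1, hDg2, Matrix.add_mul, Matrix.sub_mul, Matrix.mul_add,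
        Matrix.mul_sub, Matrix.neg_mul, Matrix.smul_mul, mul_smul_comm, Matrix.one_mul,
        Matrix.mul_one, Matrix.mul_zero, Matrix.zero_mul, add_zero, zero_add, smul_zero,
        hQW, hQY, hJW, hJY, hYD, hYE, ← hYdef, smul_smul]
      module
  have hSfact : S = fromBlocks W 0 0 W * fromBlocks 1 E E (1 - (2:ℝ) • E) := by
    rw [hSdef, fromBlocks_multiply]
    simp only [Matrix.mul_one, Matrix.mul_zero, Matrix.zero_mul, add_zero, zero_add, ← hYdef]
  have hTdet : IsUnit (fromBlocks (1 : Matrix (Fin n) (Fin n) ℝ) E E (1 - (2:ℝ) • E)).det := by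
    have hmul : fromBlocks (1 : Matrix (Fin n) (Fin n) ℝ) E E (1 - (2:ℝ) • E) *
        fromBlocks (1 - (1/2 : ℝ) • E) ((1/2 : ℝ) • E) ((1/2 : ℝ) • E) (1 - (3/2 : ℝ) • E) = 1 := by
      rw [fromBlocks_multiply, ← fromBlocks_one]
      refine Matrix.fromBlocks_inj.mpr ⟨?_, ?_, ?_, ?_⟩ <;>
      · simp only [Matrix.mul_add, Matrix.mul_sub, Matrix.sub_mul, Matrix.add_mul,
          Matrix.one_mul, Matrix.mul_one, Matrix.smul_mul, mul_smul_comm, hEE, smul_smul]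
        module
    have hd := congrArg Matrix.det hmul
    rw [det_mul, det_one] at hd
    exact IsUnit.of_mul_eq_one _ hd
  have hVdet : IsUnit V.det :=
    IsUnit.of_mul_eq_one _ (by rw [← det_mul, hV1, det_one])
  have hWdet : IsUnit W.det := by
    rw [hWdef, det_mul]
    exact hVdet.mul (Rmat_det_isUnit w i₀ (by omega) hw0)
  have hSdet : IsUnit S.det := by
    rw [hSfact, det_mul, det_fromBlocks_zero₂₁]
    exact (hWdet.mul hWdet).mul hTdet
  have hSS : S * S⁻¹ = 1 := mul_nonsing_inv S hSdet
  have hS'S : S⁻¹ * S = 1 := nonsing_inv_mul S hSdet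
  have hQc : Q = S * diagonal (Sum.elim d1 d2) * S⁻¹ := by
    calc Q = Q * (S * S⁻¹) := by rw [hSS, Matrix.mul_one]
    _ = (Q * S) * S⁻¹ := by rw [Matrix.mul_assoc]
    _ = (S * diagonal (Sum.elim d1 d2)) * S⁻¹ := by rw [hQS]
  have hcp : Q.charpoly = (diagonal (Sum.elim d1 d2)).charpoly := by
    rw [hQc]
    exact my_charpoly_conj S S⁻¹ _ hSS hS'S
  refine ⟨i₀, hμ0, ?_⟩
  rw [eig_multiset_eq_roots hQH, hcp, my_charpoly_roots_diagonal]
  have huniv : (Finset.univ : Finset (Fin n ⊕ Fin n)).val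
      = Finset.univ.val.map Sum.inl + Finset.univ.val.map Sum.inr := by
    rw [← Finset.univ_disjSum_univ, Finset.val_disjSum]
    rfl
  rw [huniv, Multiset.map_add, Multiset.map_map, Multiset.map_map]
  rw [show (Sum.elim d1 d2 ∘ Sum.inl) = d1 from rfl, show (Sum.elim d1 d2 ∘ Sum.inr) = d2 from rfl]
  have hsplit : (Finset.univ.val : Multiset (Fin n)) = i₀ ::ₘ Finset.univ.val.erase i₀ :=
    (Multiset.cons_erase (Finset.mem_val.mpr (Finset.mem_univ i₀))).symm
  rw [hsplit, Multiset.map_cons, Multiset.map_cons]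
  rw [show d1 i₀ = 0 by rw [hd1def]; simp]
  rw [show d2 i₀ = 2*((n:ℝ)*p) by rw [hd2def]; simp]
  have hnod : i₀ ∉ Finset.univ.val.erase i₀ :=
    Multiset.Nodup.notMem_erase (Finset.univ.nodup)
  have hmap1 : (Finset.univ.val.erase i₀).map d1
      = (Finset.univ.val.erase i₀).map (fun i => (n:ℝ)*p + μ i) := by
    apply Multiset.map_congr rfl
    intro x hx
    have hxne : x ≠ i₀ := fun hcon => hnod (hcon ▸ hx)
    rw [hd1def]
    simp [hxne]
  have hmap2 : (Finset.univ.val.erase i₀).map d2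
      = (Finset.univ.val.erase i₀).map (fun i => (n:ℝ)*p + (n:ℝ) - μ i) := by
    apply Multiset.map_congr rfl
    intro x hx
    have hxne : x ≠ i₀ := fun hcon => hnod (hcon ▸ hx)
    rw [hd2def]
    simp [hxne]
  rw [hmap1, hmap2, Multiset.cons_add, Multiset.add_cons, Multiset.erase_cons_head]

end KeyLemma

private lemma cons_getElem_succ (a : ℝ) (l : List ℝ) (k : ℕ) (hk : k < l.length) :
    (a :: l)[k+1]! = l[k]! := by
  rw [getElem!_pos (a :: l) (k+1) (by simpa using Nat.succ_lt_succ hk), getElem!_pos l k hk]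
  simp


/-- For a simple graph `G₁` on `n ≥ 2` vertices with Laplacian `Q₁` coupled
to its complementary graph (Laplacian `nI − J − Q₁`) via the n-to-n interconnection
`B = pJ`, the second-smallest eigenvalue of the supra-Laplacian equals
`min(2np, np + λ₂(Q₁), np + n − λ_max(Q₁))`; in particular `λ₂(Q) = 2np` iff
`np ≤ min(λ₂(Q₁), n − λ_max(Q₁))`, so the transition occurs at
`p* = min(λ₂(Q₁)/n, 1 − λ_max(Q₁)/n)`. -/
theorem stmt_15
    (n : ℕ) (hn : 2 ≤ n) (p : ℝ) (hp : 0 ≤ p)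
    (G₁ : SimpleGraph (Fin n)) [DecidableRel G₁.Adj]
    (hQ₁ : (G₁.lapMatrix ℝ).IsHermitian)
    (Q : Matrix (Fin n ⊕ Fin n) (Fin n ⊕ Fin n) ℝ)
    (hQdef : Q = Matrix.fromBlocks
      (G₁.lapMatrix ℝ + ((n:ℝ) * p) • 1) (-(p • allOnes n))
      (-(p • allOnes n)) ((n:ℝ) • 1 - allOnes n - G₁.lapMatrix ℝ + ((n:ℝ) * p) • 1))
    (hQH : Q.IsHermitian) :
    (sortedEigs hQH)[1]! =
      min (2 * (n:ℝ) * p)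
        (min ((n:ℝ) * p + (sortedEigs hQ₁)[1]!)
          ((n:ℝ) * p + (n:ℝ) - (sortedEigs hQ₁)[n - 1]!)) ∧
      ((sortedEigs hQH)[1]! = 2 * (n:ℝ) * p ↔
        (n:ℝ) * p ≤ min ((sortedEigs hQ₁)[1]!) ((n:ℝ) - (sortedEigs hQ₁)[n - 1]!)) := by

  classical
  obtain ⟨i₀, hμ0, hmult⟩ := key_multiset n hn p G₁ hQ₁ Q hQdef hQH
  set μ := hQ₁.eigenvalues with hμdef
  have hnR : (0:ℝ) < n := by
    have : (2:ℝ) ≤ n := by exact_mod_cast hn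
    linarith
  have hbounds : ∀ i, 0 ≤ μ i ∧ μ i ≤ n := fun i => lap_eig_bounds G₁ (by omega) hQ₁ i
  set tailM : Multiset ℝ := (Finset.univ.val.erase i₀).map μ with htaildef
  have hm₁ : (Finset.univ.val.map μ : Multiset ℝ) = 0 ::ₘ tailM := by
    rw [show (Finset.univ.val : Multiset (Fin n)) = i₀ ::ₘ Finset.univ.val.erase i₀ from
      (Multiset.cons_erase (Finset.mem_val.mpr (Finset.mem_univ i₀))).symm]
    rw [Multiset.map_cons, hμ0]
  have htail_mem : ∀ x ∈ tailM, 0 ≤ x ∧ x ≤ n := by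
    intro x hx
    obtain ⟨i, _, rfl⟩ := Multiset.mem_map.mp hx
    exact hbounds i
  have hcard : Multiset.card tailM = n - 1 := by
    rw [htaildef, Multiset.card_map,
      Multiset.card_erase_of_mem (Finset.mem_val.mpr (Finset.mem_univ i₀))]
    simp
  have htne : tailM ≠ 0 := by
    intro h
    rw [h] at hcard
    simp at hcard
    omega
  have hL1 : sortedEigs hQ₁ = 0 :: Multiset.sort tailM (· ≤ ·) := by
    unfold sortedEigs
    rw [← hμdef, hm₁]
    exact sort_cons_of_le tailM 0 (fun x hx => (htail_mem x hx).1)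
  set ts := Multiset.sort tailM (· ≤ ·) with htsdef
  have hts_len : ts.length = n - 1 := by rw [htsdef, Multiset.length_sort, hcard]
  have hmin := sort_head_min tailM htne
  have hmax := sort_last_max tailM (n-2) (by rw [hcard]; omega)
  set lam2 := ts[0]! with hlam2def
  set lamM := ts[n-2]! with hlamMdef
  have hg1 : (sortedEigs hQ₁)[1]! = lam2 := by
    rw [hL1, show (1:ℕ) = 0 + 1 from rfl]
    exact cons_getElem_succ 0 ts 0 (by omega)
  have hg2 : (sortedEigs hQ₁)[n-1]! = lamM := by
    rw [hL1, show n - 1 = (n-2) + 1 by omega]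
    exact cons_getElem_succ 0 ts (n-2) (by omega)
  -- Q side
  set rest : Multiset ℝ := (2*((n:ℝ)*p)) ::ₘ
      (tailM.map (fun x => (n:ℝ)*p + x) + tailM.map (fun x => (n:ℝ)*p + (n:ℝ) - x)) with hrestdef
  have hmm1 : (Finset.univ.val.erase i₀).map (fun i => (n:ℝ)*p + μ i)
      = tailM.map (fun x => (n:ℝ)*p + x) := by
    rw [htaildef, Multiset.map_map]
    rfl
  have hmm2 : (Finset.univ.val.erase i₀).map (fun i => (n:ℝ)*p + (n:ℝ) - μ i)
      = tailM.map (fun x => (n:ℝ)*p + (n:ℝ) - x) := by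
    rw [htaildef, Multiset.map_map]
    rfl
  have hmultQ : Finset.univ.val.map hQH.eigenvalues = 0 ::ₘ rest := by
    rw [hmult, hmm1, hmm2, hrestdef]
  have hrest_nonneg : ∀ x ∈ rest, 0 ≤ x := by
    intro x hx
    rw [hrestdef] at hx
    rcases Multiset.mem_cons.mp hx with h | h
    · rw [h]
      have := mul_nonneg (le_of_lt hnR) hp
      linarith
    · rcases Multiset.mem_add.mp h with h | h
      · obtain ⟨y, hy, rfl⟩ := Multiset.mem_map.mp h
        have h1 := (htail_mem y hy).1
        have := mul_nonneg (le_of_lt hnR) hp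
        linarith
      · obtain ⟨y, hy, rfl⟩ := Multiset.mem_map.mp h
        have h2 := (htail_mem y hy).2
        have := mul_nonneg (le_of_lt hnR) hp
        linarith
  have hLQ : sortedEigs hQH = 0 :: Multiset.sort rest (· ≤ ·) := by
    unfold sortedEigs
    rw [hmultQ]
    exact sort_cons_of_le rest 0 hrest_nonneg
  have hQne : rest ≠ 0 := by
    rw [hrestdef]
    exact Multiset.cons_ne_zero
  have hminQ := sort_head_min rest hQne
  set N := (Multiset.sort rest (· ≤ ·))[0]! with hNdef
  have hg3 : (sortedEigs hQH)[1]! = N := by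
    rw [hLQ, show (1:ℕ) = 0 + 1 from rfl]
    refine cons_getElem_succ 0 _ 0 ?_
    rw [Multiset.length_sort]
    rw [hrestdef]
    simp
  have hmem2np : (2*((n:ℝ)*p)) ∈ rest := by
    rw [hrestdef]; exact Multiset.mem_cons_self _ _
  have hmemB : (n:ℝ)*p + lam2 ∈ rest := by
    rw [hrestdef]
    refine Multiset.mem_cons_of_mem (Multiset.mem_add.mpr (Or.inl ?_))
    exact Multiset.mem_map.mpr ⟨lam2, hmin.1, rfl⟩
  have hmemC : (n:ℝ)*p + (n:ℝ) - lamM ∈ rest := by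
    rw [hrestdef]
    refine Multiset.mem_cons_of_mem (Multiset.mem_add.mpr (Or.inr ?_))
    exact Multiset.mem_map.mpr ⟨lamM, hmax.1, rfl⟩
  have hN : N = min (2 * (n:ℝ) * p)
      (min ((n:ℝ) * p + lam2) ((n:ℝ) * p + (n:ℝ) - lamM)) := by
    apply le_antisymm
    · apply le_min
      · have := hminQ.2 _ hmem2np
        linarith
      · exact le_min (hminQ.2 _ hmemB) (hminQ.2 _ hmemC)
    · rcases Multiset.mem_cons.mp (by rw [← hrestdef]; exact hminQ.1) with h | h
      · rw [h]
        have : 2 * (n:ℝ) * p = 2*((n:ℝ)*p) := by ring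
        rw [← this]
        exact min_le_left _ _
      · rcases Multiset.mem_add.mp h with h | h
        · obtain ⟨x, hx, hxe⟩ := Multiset.mem_map.mp h
          have hx2 : lam2 ≤ x := hmin.2 x hx
          calc min (2 * (n:ℝ) * p) (min ((n:ℝ) * p + lam2) ((n:ℝ) * p + (n:ℝ) - lamM))
              ≤ (n:ℝ) * p + lam2 := (min_le_right _ _).trans (min_le_left _ _)
            _ ≤ (n:ℝ) * p + x := by linarith
            _ = N := hxe
        · obtain ⟨x, hx, hxe⟩ := Multiset.mem_map.mp h
          have hx2 : x ≤ lamM := hmax.2 x hx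
          calc min (2 * (n:ℝ) * p) (min ((n:ℝ) * p + lam2) ((n:ℝ) * p + (n:ℝ) - lamM))
              ≤ (n:ℝ) * p + (n:ℝ) - lamM := (min_le_right _ _).trans (min_le_right _ _)
            _ ≤ (n:ℝ) * p + (n:ℝ) - x := by linarith
            _ = N := hxe
  constructor
  · rw [hg3, hg1, hg2, hN]
  · rw [hg3, hg1, hg2, hN]
    constructor
    · intro h
      have h1 : 2 * (n:ℝ) * p ≤ min ((n:ℝ) * p + lam2) ((n:ℝ) * p + (n:ℝ) - lamM) :=
        min_eq_left_iff.mp h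
      have h2 := (le_min_iff.mp h1).1
      have h3 := (le_min_iff.mp h1).2
      exact le_min (by linarith) (by linarith)
    · intro h
      have h1 := (le_min_iff.mp h).1
      have h2 := (le_min_iff.mp h).2
      exact min_eq_left (le_min (by linarith) (by linarith))
end

section
/- Let G₁ be the star graph on n ≥ 3 vertices (one hub adjacent to the other n−1 vertices and no other edges) with Laplacian matrix Q₁, let p > 0, and let Q = [[Q₁ + np·I, −pJ], [−pJ, nI − J − Q₁ + np·I]] be the supra-Laplacian of the star coupled to its complementary graph via the n-to-n interconnection B = pJ. Then the second-smallest eigenvalue of Q equals λ₂(Q) = np; in particular λ₂(Q) < 2np for every p > 0, so although 2np is always an eigenvalue of Q (with eigenvector (u, −u)), the structural transition of the algebraic connectivity never occurs. -/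
open Matrix

open Polynomial


def Vmat (n : ℕ) (hub s : Fin n) : Matrix (Fin n) (Fin n) ℝ :=
  Matrix.of fun i j =>
    if j = hub then 1
    else if j = s then (if i = hub then (n : ℝ) - 1 else -1)
    else (if i = j then (1:ℝ) else 0) - (if i = s then 1 else 0)

def dOne (n : ℕ) (hub s : Fin n) : Fin n → ℝ := fun j =>
  if j = hub then 0 else if j = s then n else 1

def eOne (n : ℕ) (hub : Fin n) : Fin n → ℝ := fun j => if j = hub then n else 0



lemma charmatrix_eq {ι : Type*} [Fintype ι] [DecidableEq ι] (M : Matrix ι ι ℝ) :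
    M.charmatrix = Matrix.diagonal (fun _ => (X : ℝ[X])) - M.map C := by
  ext i j
  by_cases h : i = j <;>
    simp [Matrix.charmatrix_apply, h, Matrix.diagonal_apply_ne, Matrix.sub_apply]

lemma charpoly_eq_of_comm {ι : Type*} [Fintype ι] [DecidableEq ι]
    (P A B : Matrix ι ι ℝ) (h : B * P = P * A) (hP : P.det ≠ 0) :
    B.charpoly = A.charpoly := by
  have key : B.charmatrix * P.map C = P.map C * A.charmatrix := by
    rw [charmatrix_eq, charmatrix_eq, sub_mul, mul_sub]
    congr 1
    · ext i j
      rw [Matrix.diagonal_mul, Matrix.mul_diagonal, mul_comm]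
    · rw [← Matrix.map_mul, ← Matrix.map_mul, h]
  have hdet := congrArg Matrix.det key
  rw [Matrix.det_mul, Matrix.det_mul] at hdet
  have hPC : (P.map C).det ≠ 0 := by
    have := (RingHom.map_det (C : ℝ →+* ℝ[X]) P).symm
    rw [RingHom.mapMatrix_apply] at this
    rw [this]
    simpa using hP
  unfold Matrix.charpoly
  exact mul_right_cancel₀ hPC (by rw [hdet, mul_comm])
lemma charpoly_diag {ι : Type*} [Fintype ι] [DecidableEq ι] (d : ι → ℝ) :
    (Matrix.diagonal d).charpoly = ∏ i, (X - C (d i)) := by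
  unfold Matrix.charpoly
  rw [charmatrix_eq]
  have : Matrix.diagonal (fun _ : ι => (X:ℝ[X])) - (Matrix.diagonal d).map C
      = Matrix.diagonal (fun i => X - C (d i)) := by
    ext i j
    by_cases h : i = j <;> simp [h, Matrix.diagonal_apply_ne]
  rw [this, Matrix.det_diagonal]

lemma charpoly_hermitian {ι : Type*} [Fintype ι] [DecidableEq ι]
    {A : Matrix ι ι ℝ} (hA : A.IsHermitian) :
    A.charpoly = ∏ i, (X - C (hA.eigenvalues i)) := by
  have hspec := hA.spectral_theorem
  set U : Matrix ι ι ℝ := (hA.eigenvectorUnitary : Matrix ι ι ℝ) with hU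
  have hdiag : Matrix.diagonal ((RCLike.ofReal : ℝ → ℝ) ∘ hA.eigenvalues)
      = Matrix.diagonal hA.eigenvalues := by
    congr 1
  have hUU : U * star U = 1 := (Matrix.mem_unitaryGroup_iff).mp hA.eigenvectorUnitary.2
  have h : A * U = U * Matrix.diagonal hA.eigenvalues := by
    calc A * U = (U * Matrix.diagonal hA.eigenvalues * star U) * U := by
          rw [← hdiag]
          conv_lhs => rw [hspec]
          rfl
      _ = U * Matrix.diagonal hA.eigenvalues * (star U * U) := by rw [mul_assoc]
      _ = U * Matrix.diagonal hA.eigenvalues := by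
          rw [(Matrix.mem_unitaryGroup_iff').mp hA.eigenvectorUnitary.2, mul_one]
  have hdet : U.det ≠ 0 := by
    intro h0
    have := congrArg Matrix.det hUU
    rw [Matrix.det_mul, h0, zero_mul, Matrix.det_one] at this
    exact zero_ne_one this
  rw [charpoly_eq_of_comm U (Matrix.diagonal hA.eigenvalues) A h hdet, charpoly_diag]

lemma charmatrix_blockDiag {ι : Type*} [Fintype ι] [DecidableEq ι]
    (M : ι → Matrix (Fin 2) (Fin 2) ℝ) :
    (Matrix.blockDiagonal M).charmatrix
      = Matrix.blockDiagonal (fun i => (M i).charmatrix) := by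
  ext ⟨t, x⟩ ⟨t', y⟩
  by_cases h : x = y
  · subst h
    by_cases ht : t = t' <;>
      simp [Matrix.charmatrix_apply, Matrix.blockDiagonal_apply, ht,
        Matrix.diagonal_apply, Prod.ext_iff]
  · simp [Matrix.charmatrix_apply, Matrix.blockDiagonal_apply, h,
      Matrix.diagonal_apply, Prod.ext_iff]

lemma charpoly_blockDiag {ι : Type*} [Fintype ι] [DecidableEq ι]
    (M : ι → Matrix (Fin 2) (Fin 2) ℝ) :
    (Matrix.blockDiagonal M).charpoly = ∏ i, (M i).charpoly := by
  unfold Matrix.charpoly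
  rw [charmatrix_blockDiag, Matrix.det_blockDiagonal]

def pairEquiv (n : ℕ) : Fin 2 × Fin n ≃ Fin n ⊕ Fin n where
  toFun x := if x.1 = 0 then .inl x.2 else .inr x.2
  invFun y := Sum.elim (fun j => ((0 : Fin 2), j)) (fun j => ((1 : Fin 2), j)) y
  left_inv := by rintro ⟨t, j⟩; fin_cases t <;> simp
  right_inv := by rintro (j | j) <;> simp

lemma charpoly_fin_two (M : Matrix (Fin 2) (Fin 2) ℝ) :
    M.charpoly = (X - C (M 0 0)) * (X - C (M 1 1)) - C (M 0 1) * C (M 1 0) := by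
  unfold Matrix.charpoly
  rw [Matrix.det_fin_two]
  rw [Matrix.charmatrix_apply_eq, Matrix.charmatrix_apply_eq,
    Matrix.charmatrix_apply_ne _ _ _ (by decide),
    Matrix.charmatrix_apply_ne _ _ _ (by decide)]
  ring

lemma sorted_snd (a b : ℝ) (t : Multiset ℝ) (hab : a ≤ b) (ht : ∀ x ∈ t, b ≤ x) :
    (Multiset.sort (a ::ₘ b ::ₘ t) (· ≤ ·))[1]! = b := by
  have hsort := Multiset.pairwise_sort (a ::ₘ b ::ₘ t) (· ≤ ·)
  have hperm := Multiset.sort_eq (a ::ₘ b ::ₘ t) (· ≤ ·)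
  revert hsort hperm
  generalize Multiset.sort (a ::ₘ b ::ₘ t) (· ≤ ·) = l
  intro hsort hperm
  match l, hsort, hperm with
  | [], _, hperm => exact absurd (congrArg Multiset.card hperm) (by simp)
  | [x], _, hperm =>
      exfalso
      have := congrArg Multiset.card hperm
      simp at this
  | x0 :: x1 :: rest, hsort, hperm => ?_
  simp only [List.getElem!_cons_succ, List.getElem!_cons_zero]
  -- countP arguments
  have hcoe : (x0 :: x1 :: rest : Multiset ℝ) = a ::ₘ b ::ₘ t := hperm
  have hx01 : x0 ≤ x1 := (List.pairwise_cons.mp hsort).1 x1 (by simp)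
  have hrest : ∀ y ∈ rest, x1 ≤ y := (List.pairwise_cons.mp (List.pairwise_cons.mp hsort).2).1
  -- b ≤ x1
  have h1 : b ≤ x1 := by
    by_contra hlt
    push_neg at hlt
    have hc : Multiset.countP (fun x => x < b) (↑(x0 :: x1 :: rest) : Multiset ℝ)
        = Multiset.countP (fun x => x < b) (a ::ₘ b ::ₘ t) := by rw [hcoe]
    simp only [← Multiset.cons_coe, Multiset.countP_cons] at hc
    have ht0 : Multiset.countP (fun x => x < b) t = 0 := by
      rw [Multiset.countP_eq_zero]
      intro x hx
      exact not_lt.mpr (ht x hx)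
    have h2 : Multiset.countP (fun x => x < b) (↑rest : Multiset ℝ) ≥ 0 := Nat.zero_le _
    simp only [ht0, lt_self_iff_false, if_false, if_pos hlt,
      if_pos (lt_of_le_of_lt hx01 hlt)] at hc
    split_ifs at hc <;> omega
  -- x1 ≤ b
  have h2 : x1 ≤ b := by
    by_contra hlt
    push_neg at hlt
    have hc : Multiset.countP (fun x => x < x1) (↑(x0 :: x1 :: rest) : Multiset ℝ)
        = Multiset.countP (fun x => x < x1) (a ::ₘ b ::ₘ t) := by rw [hcoe]
    simp only [← Multiset.cons_coe, Multiset.countP_cons] at hc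
    have ht0 : Multiset.countP (fun x => x < x1) (↑rest : Multiset ℝ) = 0 := by
      rw [Multiset.countP_eq_zero]
      intro x hx
      exact not_lt.mpr (hrest x (by exact_mod_cast hx))
    simp only [ht0, lt_self_iff_false, if_false, if_pos hlt,
      if_pos (lt_of_le_of_lt hab hlt)] at hc
    split_ifs at hc <;> omega
  linarith
lemma sum_split {n : ℕ} (hub s : Fin n) (hs : s ≠ hub) (f : Fin n → ℝ) :
    ∑ j, f j = f hub + f s + ∑ j ∈ (Finset.univ.erase hub).erase s, f j := by
  rw [← Finset.add_sum_erase _ f (Finset.mem_univ hub),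
    ← Finset.add_sum_erase _ f (Finset.mem_erase.mpr ⟨hs, Finset.mem_univ s⟩), add_assoc]

lemma lap_apply {n : ℕ} (hn : 3 ≤ n) (G₁ : SimpleGraph (Fin n)) [DecidableRel G₁.Adj]
    (hub : Fin n) (hstar : ∀ i j, G₁.Adj i j ↔ (i ≠ j ∧ (i = hub ∨ j = hub)))
    (i k : Fin n) :
    G₁.lapMatrix ℝ i k = if i = k then (if i = hub then (n:ℝ)-1 else 1)
      else (if i = hub ∨ k = hub then -1 else 0) := by
  have hdeg : ∀ i : Fin n, (G₁.degree i : ℝ) = if i = hub then (n:ℝ)-1 else 1 := by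
    intro i
    rw [SimpleGraph.degree_eq_sum_if_adj]
    by_cases hi : i = hub
    · have h1 : ∀ j : Fin n, (if G₁.Adj i j then (1:ℝ) else 0)
          = 1 - (if j = hub then 1 else 0) := by
        intro j
        by_cases hj : j = hub
        · have : ¬ G₁.Adj i j := by
            rw [hstar i j]
            rintro ⟨hne, -⟩
            exact hne (hi.trans hj.symm)
          rw [← hj] at *
          simp [this, hj]
        · have : G₁.Adj i j := (hstar i j).mpr
            ⟨by rw [hi]; exact Ne.symm hj, Or.inl hi⟩
          simp [this, hj]
      rw [Finset.sum_congr rfl (fun j _ => h1 j), Finset.sum_sub_distrib]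
      simp [Finset.sum_ite_eq', hi]
    · have h1 : ∀ j : Fin n, (if G₁.Adj i j then (1:ℝ) else 0)
          = if j = hub then 1 else 0 := by
        intro j
        by_cases hj : j = hub
        · have : G₁.Adj i j := (hstar i j).mpr
            ⟨fun h => hi (h.trans hj), Or.inr hj⟩
          rw [← hj] at *
          simp [this, hj]
        · have : ¬ G₁.Adj i j := by
            rw [hstar i j]
            rintro ⟨-, h | h⟩ <;> [exact hi h; exact hj h]
          simp [this, hj, hi]
      rw [Finset.sum_congr rfl (fun j _ => h1 j)]
      simp [Finset.sum_ite_eq', hi]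
  rw [SimpleGraph.lapMatrix]
  simp only [Matrix.sub_apply, SimpleGraph.degMatrix, Matrix.diagonal_apply,
    SimpleGraph.adjMatrix_apply]
  by_cases hik : i = k
  · subst hik
    simp [hdeg i]
  · simp only [hik, if_false]
    by_cases h : i = hub ∨ k = hub
    · have : G₁.Adj i k := (hstar i k).mpr ⟨hik, h⟩
      simp [this, h]
    · have : ¬ G₁.Adj i k := by rw [hstar i k]; rintro ⟨-, hh⟩; exact h hh
      simp [this, h]

lemma lap_row_sum {n : ℕ} (G₁ : SimpleGraph (Fin n)) [DecidableRel G₁.Adj] (i : Fin n) : ∑ k, G₁.lapMatrix ℝ i k = 0 := by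
  have := congrFun (G₁.lapMatrix_mulVec_const_eq_zero (R := ℝ)) i
  simpa [Matrix.mulVec, dotProduct] using this


lemma lap_mul_Vmat {n : ℕ} (hn : 3 ≤ n) (G₁ : SimpleGraph (Fin n)) [DecidableRel G₁.Adj]
    (hub s : Fin n) (hs : s ≠ hub)
    (hstar : ∀ i j, G₁.Adj i j ↔ (i ≠ j ∧ (i = hub ∨ j = hub))) :
    G₁.lapMatrix ℝ * Vmat n hub s = Vmat n hub s * Matrix.diagonal (dOne n hub s) := by
  ext i j
  rw [Matrix.mul_apply, Matrix.mul_diagonal]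
  by_cases hj : j = hub
  · have hcol : ∀ k, Vmat n hub s k j = 1 := fun k => by simp [Vmat, hj]
    simp only [hcol, mul_one]
    rw [lap_row_sum G₁ i]
    simp [dOne, Vmat, hj]
  · by_cases hjs : j = s
    · have hterm : ∀ k, G₁.lapMatrix ℝ i k * Vmat n hub s k j
          = (n:ℝ) * (if k = hub then G₁.lapMatrix ℝ i k else 0) - G₁.lapMatrix ℝ i k := by
        intro k
        by_cases hk : k = hub <;> simp [Vmat, hj, hjs, hk, hs] <;> ring
      rw [Finset.sum_congr rfl (fun k _ => hterm k), Finset.sum_sub_distrib,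
        ← Finset.mul_sum, Finset.sum_ite_eq' Finset.univ hub, lap_row_sum G₁ i]
      simp only [Finset.mem_univ, if_pos, sub_zero]
      rw [lap_apply hn G₁ hub hstar i hub]
      by_cases hih : i = hub <;> simp [Vmat, dOne, hj, hjs, hih, hs] <;> ring
    · have hcol : ∀ k, Vmat n hub s k j
          = (if k = j then (1:ℝ) else 0) - (if k = s then 1 else 0) := by
        intro k
        simp [Vmat, hj, hjs]
      have hsj : ¬ s = j := fun h => hjs h.symm
      have hterm : ∀ k, G₁.lapMatrix ℝ i k * Vmat n hub s k j
          = (if k = j then G₁.lapMatrix ℝ i k else 0)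
            - (if k = s then G₁.lapMatrix ℝ i k else 0) := by
        intro k
        rw [hcol k]
        by_cases hk : k = j
        · have hk2 : ¬ k = s := fun h => hjs (hk.symm.trans h)
          simp [hk, hk2, hjs]
        · by_cases hk2 : k = s
          · simp [hk, hk2, hsj]
          · simp [hk, hk2]
      rw [Finset.sum_congr rfl (fun k _ => hterm k), Finset.sum_sub_distrib,
        Finset.sum_ite_eq' Finset.univ j, Finset.sum_ite_eq' Finset.univ s]
      simp only [Finset.mem_univ, if_pos]
      rw [lap_apply hn G₁ hub hstar i j, lap_apply hn G₁ hub hstar i s]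
      have hd : dOne n hub s j = 1 := by simp [dOne, hj, hjs]
      rw [hd, mul_one, hcol i]
      by_cases hih : i = hub
      · have h1 : ¬ i = j := fun h => hj (h.symm.trans hih)
        have h2 : ¬ i = s := fun h => hs (h.symm.trans hih)
        have h3 : ¬ hub = j := fun h => hj h.symm
        have h4 : ¬ hub = s := fun h => hs h.symm
        simp [hih, h1, h2, h3, h4]
      · by_cases hij : i = j
        · have h2 : ¬ i = s := fun h => hjs (hij.symm.trans h)
          simp [hih, hij, h2, hj, hjs, hs]
        · by_cases his : i = s
          · simp [hih, hij, his, hs, hsj, hj]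
          · simp [hih, hij, his, hj, hs]

lemma allOnes_mul_Vmat {n : ℕ} (hn : 3 ≤ n) (hub s : Fin n) (hs : s ≠ hub) :
    allOnes n * Vmat n hub s = Vmat n hub s * Matrix.diagonal (eOne n hub) := by
  ext i j
  rw [Matrix.mul_apply, Matrix.mul_diagonal]
  have hones : ∀ k, allOnes n i k = 1 := fun k => rfl
  simp only [hones, one_mul]
  by_cases hj : j = hub
  · have hcol : ∀ k, Vmat n hub s k j = 1 := fun k => by simp [Vmat, hj]
    simp [hcol, Vmat, eOne, hj, Finset.card_univ]
  · by_cases hjs : j = s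
    · have hterm : ∀ k, Vmat n hub s k j
          = (n:ℝ) * (if k = hub then 1 else 0) - 1 := by
        intro k
        by_cases hk : k = hub <;> simp [Vmat, hj, hjs, hk, hs] <;> ring
      rw [Finset.sum_congr rfl (fun k _ => hterm k), Finset.sum_sub_distrib,
        ← Finset.mul_sum, Finset.sum_ite_eq' Finset.univ hub]
      simp [eOne, hj, Finset.card_univ]
    · have hterm : ∀ k, Vmat n hub s k j
          = (if k = j then (1:ℝ) else 0) - (if k = s then 1 else 0) := by
        intro k
        simp [Vmat, hj, hjs]
      rw [Finset.sum_congr rfl (fun k _ => hterm k), Finset.sum_sub_distrib,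
        Finset.sum_ite_eq' Finset.univ j, Finset.sum_ite_eq' Finset.univ s]
      simp [eOne, hj]

lemma Vmat_det_ne_zero {n : ℕ} (hn : 3 ≤ n) {hub s : Fin n} (hs : s ≠ hub) :
    (Vmat n hub s).det ≠ 0 := by
  intro h0
  obtain ⟨c, hc0, hc⟩ := (Matrix.exists_mulVec_eq_zero_iff).mpr h0
  have hrow : ∀ i, ∑ j, Vmat n hub s i j * c j = 0 := fun i => congrFun hc i
  set T := (Finset.univ.erase hub).erase s with hT
  have hmemT : ∀ j ∈ T, j ≠ s ∧ j ≠ hub := by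
    intro j hj
    rw [hT, Finset.mem_erase, Finset.mem_erase] at hj
    exact ⟨hj.1, hj.2.1⟩
  -- row hub
  have E1 : c hub + ((n:ℝ) - 1) * c s = 0 := by
    have := hrow hub
    rw [sum_split hub s hs] at this
    have hz : ∑ j ∈ T, Vmat n hub s hub j * c j = 0 := by
      apply Finset.sum_eq_zero
      intro j hj
      obtain ⟨hjs, hjh⟩ := hmemT j hj
      simp [Vmat, hjh, hjs, Ne.symm hjh, Ne.symm hs]
    rw [hz] at this
    simp [Vmat, hs] at this
    linarith [this]
  -- rows j ∈ T
  have E2 : ∀ i ∈ T, c hub - c s + c i = 0 := by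
    intro i hi
    obtain ⟨his, hih⟩ := hmemT i hi
    have := hrow i
    rw [sum_split hub s hs] at this
    have hmain : ∑ j ∈ T, Vmat n hub s i j * c j = c i := by
      have : ∀ j ∈ T, Vmat n hub s i j * c j = if j = i then c j else 0 := by
        intro j hj
        obtain ⟨hjs, hjh⟩ := hmemT j hj
        simp only [Vmat, Matrix.of_apply, hjs, hjh, if_false, his, if_neg]
        by_cases h : i = j
        · simp [h]
        · simp [h, Ne.symm h, his]
      rw [Finset.sum_congr rfl this, Finset.sum_ite_eq' T i c, if_pos hi]
    rw [hmain] at this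
    simp [Vmat, hih, his, hs] at this
    linarith [this]
  -- row s
  have E3 : c hub - c s - ∑ j ∈ T, c j = 0 := by
    have := hrow s
    rw [sum_split hub s hs] at this
    have hmain : ∑ j ∈ T, Vmat n hub s s j * c j = -∑ j ∈ T, c j := by
      rw [← Finset.sum_neg_distrib]
      apply Finset.sum_congr rfl
      intro j hj
      obtain ⟨hjs, hjh⟩ := hmemT j hj
      simp [Vmat, hjh, hjs, Ne.symm hjs]
    rw [hmain] at this
    simp [Vmat, hs] at this
    linarith [this]
  have hTsum : ∑ j ∈ T, c j = ((n:ℝ) - 2) * (c s - c hub) := by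
    have h1 : ∀ j ∈ T, c j = c s - c hub := by
      intro j hj
      have := E2 j hj
      linarith
    rw [Finset.sum_congr rfl h1, Finset.sum_const]
    have hcard : T.card = n - 2 := by
      rw [hT, Finset.card_erase_of_mem (Finset.mem_erase.mpr ⟨hs, Finset.mem_univ s⟩),
        Finset.card_erase_of_mem (Finset.mem_univ hub), Finset.card_univ, Fintype.card_fin]
      omega
    rw [hcard, nsmul_eq_mul]
    congr 1
    push_cast [Nat.cast_sub (by omega : 2 ≤ n)]
    ring
  have hn3 : (3:ℝ) ≤ (n:ℝ) := by exact_mod_cast hn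
  have h4 : ((n:ℝ) - 1) * (c hub - c s) = 0 := by
    rw [hTsum] at E3
    linear_combination E3
  have h5 : c hub = c s := by
    rcases mul_eq_zero.mp h4 with h | h
    · linarith
    · linarith
  have h6 : c hub = 0 := by
    have : (n:ℝ) * c hub = 0 := by rw [h5] at E1 ⊢; linear_combination E1
    rcases mul_eq_zero.mp this with h | h
    · linarith
    · exact h
  apply hc0
  funext j
  by_cases hj : j = hub
  · rw [hj]; exact h6
  by_cases hjs : j = s
  · rw [hjs]; simp [← h5, h6]
  · have := E2 j (by rw [hT]; exact Finset.mem_erase.mpr ⟨hjs, Finset.mem_erase.mpr ⟨hj, Finset.mem_univ j⟩⟩)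
    simp only [Pi.zero_apply]
    rw [← h5] at this
    linarith
set_option maxHeartbeats 1000000 in
/-- For the star graph `G₁` on `n ≥ 3` vertices (hub adjacent to all other
vertices, no other edges) coupled to its complementary graph via the n-to-n
interconnection `B = pJ` with `p > 0`, the second-smallest eigenvalue of the
supra-Laplacian equals `np < 2np`, while `2np` is always an eigenvalue with eigenvector
`(u, −u)`: the structural transition of the algebraic connectivity never occurs. -/
theorem stmt_16
    (n : ℕ) (hn : 3 ≤ n) (p : ℝ) (hp : 0 < p)
    (G₁ : SimpleGraph (Fin n)) [DecidableRel G₁.Adj] (hub : Fin n)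
    (hstar : ∀ i j, G₁.Adj i j ↔ (i ≠ j ∧ (i = hub ∨ j = hub)))
    (Q : Matrix (Fin n ⊕ Fin n) (Fin n ⊕ Fin n) ℝ)
    (hQdef : Q = Matrix.fromBlocks
      (G₁.lapMatrix ℝ + ((n:ℝ) * p) • 1) (-(p • allOnes n))
      (-(p • allOnes n)) ((n:ℝ) • 1 - allOnes n - G₁.lapMatrix ℝ + ((n:ℝ) * p) • 1))
    (hQH : Q.IsHermitian) :
    (sortedEigs hQH)[1]! = (n:ℝ) * p ∧
      (sortedEigs hQH)[1]! < 2 * (n:ℝ) * p ∧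
      Q *ᵥ (Sum.elim (fun _ => (1:ℝ)) (fun _ => (-1:ℝ))) =
        (2 * (n:ℝ) * p) • (Sum.elim (fun _ => (1:ℝ)) (fun _ => (-1:ℝ))) := by
  obtain ⟨s, hs⟩ : ∃ s : Fin n, s ≠ hub := by
    have : Nontrivial (Fin n) := Fin.nontrivial_iff_two_le.mpr (by omega)
    exact exists_ne hub
  have hnR : (3:ℝ) ≤ (n:ℝ) := by exact_mod_cast hn
  set np : ℝ := (n:ℝ) * p with hnp
  have hnp0 : 0 < np := by rw [hnp]; nlinarith
  set V := Vmat n hub s with hV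
  set L := G₁.lapMatrix ℝ with hL
  have hLV := lap_mul_Vmat hn G₁ hub s hs hstar
  have hJV := allOnes_mul_Vmat hn hub s hs
  have hdetV := Vmat_det_ne_zero hn hs
  set a : Fin n → ℝ := fun j => dOne n hub s j + np with ha
  set b : Fin n → ℝ := fun j => -(p * eOne n hub j) with hb
  set d : Fin n → ℝ := fun j => ((n:ℝ) - eOne n hub j - dOne n hub s j) + np with hd
  set P : Matrix (Fin n ⊕ Fin n) (Fin n ⊕ Fin n) ℝ := Matrix.fromBlocks V 0 0 V with hP
  set Qt : Matrix (Fin n ⊕ Fin n) (Fin n ⊕ Fin n) ℝ :=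
    Matrix.fromBlocks (Matrix.diagonal a) (Matrix.diagonal b)
      (Matrix.diagonal b) (Matrix.diagonal d) with hQt
  have hone_diag : ∀ c : ℝ, c • (1 : Matrix (Fin n) (Fin n) ℝ)
      = Matrix.diagonal (fun _ => c) := by
    intro c
    ext i j
    by_cases h : i = j <;> simp [h, Matrix.one_apply, Matrix.diagonal_apply]
  have h11 : (L + np • (1 : Matrix (Fin n) (Fin n) ℝ)) * V = V * Matrix.diagonal a := by
    have : Matrix.diagonal a
        = Matrix.diagonal (dOne n hub s) + Matrix.diagonal (fun _ => np) := by
      ext i j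
      by_cases h : i = j <;> simp [h, Matrix.diagonal, ha]
    rw [this, Matrix.mul_add, ← hLV, ← hone_diag np, Matrix.mul_smul, Matrix.mul_one,
      add_mul, Matrix.smul_mul, Matrix.one_mul]
  have h12 : (-(p • allOnes n)) * V = V * Matrix.diagonal b := by
    have : Matrix.diagonal b = -(p • Matrix.diagonal (eOne n hub)) := by
      ext i j
      by_cases h : i = j <;> simp [h, Matrix.diagonal_apply, hb]
    rw [this, Matrix.mul_neg, Matrix.mul_smul, ← hJV, Matrix.neg_mul, Matrix.smul_mul]
  have h22 : ((n:ℝ) • 1 - allOnes n - L + np • 1) * V = V * Matrix.diagonal d := by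
    have : Matrix.diagonal d = Matrix.diagonal (fun _ => (n:ℝ))
        - Matrix.diagonal (eOne n hub) - Matrix.diagonal (dOne n hub s)
        + Matrix.diagonal (fun _ => np) := by
      ext i j
      by_cases h : i = j <;> simp [h, Matrix.diagonal, hd]
    rw [this, Matrix.mul_add, Matrix.mul_sub, Matrix.mul_sub, ← hLV, ← hJV,
      ← hone_diag (n:ℝ), ← hone_diag np, Matrix.mul_smul, Matrix.mul_one,
      Matrix.mul_smul, Matrix.mul_one, Matrix.add_mul, Matrix.sub_mul, Matrix.sub_mul,
      Matrix.smul_mul, Matrix.one_mul, Matrix.smul_mul, Matrix.one_mul, hV, hL]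
  have hQP : Q * P = P * Qt := by
    rw [hQdef, hP, hQt, Matrix.fromBlocks_multiply, Matrix.fromBlocks_multiply]
    simp only [Matrix.mul_zero, Matrix.zero_mul, add_zero, zero_add]
    rw [h11, h12, h22]
  have hdetP : P.det ≠ 0 := by
    rw [hP, Matrix.det_fromBlocks_zero₂₁]
    exact mul_ne_zero hdetV hdetV
  have hcp : Q.charpoly = Qt.charpoly := charpoly_eq_of_comm P Qt Q hQP hdetP
  set Mb : Fin n → Matrix (Fin 2) (Fin 2) ℝ := fun j => !![a j, b j; b j, d j] with hMb
  have hre : Qt = (Matrix.reindex (pairEquiv n) (pairEquiv n)) (Matrix.blockDiagonal Mb) := by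
    ext u v
    rcases u with i | i <;> rcases v with k | k <;>
      (rw [Matrix.reindex_apply, Matrix.submatrix_apply]
       by_cases hik : i = k <;>
         simp [pairEquiv, Matrix.blockDiagonal_apply, hik, hQt, hMb,
           Matrix.diagonal_apply])
  set μl : Fin n → ℝ := fun j => if j = hub then 0 else a j with hμl
  set μr : Fin n → ℝ := fun j => if j = hub then 2*np else d j with hμr
  have hfact : ∀ j, (Mb j).charpoly = (X - C (μl j)) * (X - C (μr j)) := by
    intro j
    rw [charpoly_fin_two]
    have e00 : Mb j 0 0 = a j := by simp [hMb]
    have e01 : Mb j 0 1 = b j := by simp [hMb]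
    have e10 : Mb j 1 0 = b j := by simp [hMb]
    have e11 : Mb j 1 1 = d j := by simp [hMb]
    rw [e00, e01, e10, e11]
    by_cases hj : j = hub
    · have haj : a j = np := by simp [ha, dOne, hj]
      have hdj : d j = np := by simp [hd, dOne, eOne, hj]
      have hbj : b j = -np := by simp [hb, eOne, hj, hnp]; ring
      have hml : μl j = 0 := by simp [hμl, hj]
      have hmr : μr j = 2*np := by simp [hμr, hj]
      rw [haj, hdj, hbj, hml, hmr, map_neg, map_zero]
      have h2 : C (2*np) = 2 * C np := by rw [Polynomial.C_mul, map_ofNat]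
      rw [h2]
      ring
    · have hbj : b j = 0 := by simp [hb, eOne, hj]
      have hml : μl j = a j := by simp [hμl, hj]
      have hmr : μr j = d j := by simp [hμr, hj]
      rw [hbj, hml, hmr, map_zero]
      ring
  have hQcp : Q.charpoly = ∏ i : Fin n ⊕ Fin n, (X - C (Sum.elim μl μr i)) := by
    rw [hcp, hre, Matrix.charpoly_reindex, charpoly_blockDiag,
      Finset.prod_congr rfl (fun j _ => hfact j), Finset.prod_mul_distrib,
      Fintype.prod_sum_type]
    simp only [Sum.elim_inl, Sum.elim_inr]
  have hherm := charpoly_hermitian hQH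
  have hprodeq : (∏ i, (X - C (hQH.eigenvalues i)))
      = ∏ i : Fin n ⊕ Fin n, (X - C (Sum.elim μl μr i)) := by
    rw [← hherm, hQcp]
  have hms : Finset.univ.val.map hQH.eigenvalues
      = Finset.univ.val.map (Sum.elim μl μr) := by
    have key : ∀ f : (Fin n ⊕ Fin n) → ℝ, (∏ i, (X - C (f i)))
        = ((Finset.univ.val.map f).map (fun r => X - C r)).prod := by
      intro f
      rw [Multiset.map_map]
      rfl
    have h1 := congrArg Polynomial.roots hprodeq
    rw [key, key] at h1
    rwa [Polynomial.roots_multiset_prod_X_sub_C,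
      Polynomial.roots_multiset_prod_X_sub_C] at h1
  have hnodup : (Finset.univ.val : Multiset (Fin n ⊕ Fin n)).Nodup := Finset.univ.nodup
  have hmem1 : (Sum.inl hub : Fin n ⊕ Fin n) ∈ (Finset.univ.val : Multiset (Fin n ⊕ Fin n)) :=
    Finset.mem_val.mpr (Finset.mem_univ _)
  have hmem2 : (Sum.inr s : Fin n ⊕ Fin n) ∈
      (Finset.univ.val : Multiset (Fin n ⊕ Fin n)).erase (Sum.inl hub) :=
    (Multiset.mem_erase_of_ne (by simp)).mpr (Finset.mem_val.mpr (Finset.mem_univ _))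
  set T0 := ((Finset.univ.val : Multiset (Fin n ⊕ Fin n)).erase (Sum.inl hub)).erase
    (Sum.inr s) with hT0
  have hsplit : (Finset.univ.val : Multiset (Fin n ⊕ Fin n))
      = Sum.inl hub ::ₘ Sum.inr s ::ₘ T0 := by
    rw [hT0, Multiset.cons_erase hmem2, Multiset.cons_erase hmem1]
  have hmapsplit : Finset.univ.val.map (Sum.elim μl μr)
      = (0:ℝ) ::ₘ np ::ₘ T0.map (Sum.elim μl μr) := by
    rw [hsplit, Multiset.map_cons, Multiset.map_cons]
    have hv1 : Sum.elim μl μr (Sum.inl hub) = 0 := by simp [hμl]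
    have hv2 : Sum.elim μl μr (Sum.inr s) = np := by
      simp [hμr, hd, dOne, eOne, hs]
    rw [hv1, hv2]
  have hbound : ∀ x ∈ T0.map (Sum.elim μl μr), np ≤ x := by
    intro x hx
    obtain ⟨i, hi, rfl⟩ := Multiset.mem_map.mp hx
    have hn1 : ((Finset.univ.val : Multiset (Fin n ⊕ Fin n)).erase (Sum.inl hub)).Nodup :=
      hnodup.erase _
    rw [hT0, Multiset.Nodup.mem_erase_iff hn1] at hi
    obtain ⟨hirs, hi⟩ := hi
    rw [Multiset.Nodup.mem_erase_iff hnodup] at hi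
    obtain ⟨hilh, -⟩ := hi
    rcases i with j | j
    · have hj : j ≠ hub := fun h => hilh (by rw [h])
      have : 0 ≤ dOne n hub s j := by
        by_cases hjs2 : j = s <;> simp [dOne, hj, hjs2] <;> positivity
      simp only [Sum.elim_inl, hμl, if_neg hj, ha]
      linarith
    · have hjs : j ≠ s := fun h => hirs (by rw [h])
      by_cases hj : j = hub
      · simp only [Sum.elim_inr, hμr, if_pos hj]
        linarith
      · simp only [Sum.elim_inr, hμr, if_neg hj, hd]
        have h1 : eOne n hub j = 0 := by simp [eOne, hj]
        have h2 : dOne n hub s j = 1 := by simp [dOne, hj, hjs]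
        rw [h1, h2]
        linarith
  have heq : (sortedEigs hQH)[1]! = np := by
    unfold sortedEigs
    rw [hms, hmapsplit]
    exact sorted_snd 0 np _ (le_of_lt hnp0) hbound
  refine ⟨heq, by rw [heq, hnp]; linarith, ?_⟩
  have hx : L *ᵥ (fun _ : Fin n => (1:ℝ)) = 0 := by
    rw [hL]; exact G₁.lapMatrix_mulVec_const_eq_zero
  have hJ1 : allOnes n *ᵥ (fun _ : Fin n => (1:ℝ)) = fun _ => (n:ℝ) := by
    funext i
    simp [allOnes, Matrix.mulVec, dotProduct, Finset.card_univ]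
  have hy : (fun _ : Fin n => (-1:ℝ)) = -(fun _ : Fin n => (1:ℝ)) := by
    funext i; simp
  rw [hQdef, Matrix.fromBlocks_mulVec]
  funext x
  rcases x with i | i
  · have h1 : ((L + np • (1 : Matrix (Fin n) (Fin n) ℝ)) *ᵥ fun _ => (1:ℝ)) i = np := by
      rw [Matrix.add_mulVec, Matrix.smul_mulVec, Matrix.one_mulVec, hx]
      simp
    have h2 : ((-(p • allOnes n)) *ᵥ fun _ => (-1:ℝ)) i = np := by
      rw [hy, Matrix.mulVec_neg, Matrix.neg_mulVec, Matrix.smul_mulVec, hJ1]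
      simp [hnp]
      ring
    simp only [Sum.elim_inl, Sum.elim_comp_inl, Sum.elim_comp_inr, Pi.add_apply, Pi.smul_apply, smul_eq_mul, h1, h2]
    rw [hnp]; ring
  · have h1 : ((-(p • allOnes n)) *ᵥ fun _ => (1:ℝ)) i = -np := by
      rw [Matrix.neg_mulVec, Matrix.smul_mulVec, hJ1]
      simp [hnp]
      ring
    have h2 : (((n:ℝ) • 1 - allOnes n - L + np • (1 : Matrix (Fin n) (Fin n) ℝ))
        *ᵥ fun _ => (-1:ℝ)) i = -np := by
      rw [hy, Matrix.mulVec_neg, Matrix.add_mulVec, Matrix.sub_mulVec, Matrix.sub_mulVec,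
        Matrix.smul_mulVec, Matrix.smul_mulVec, Matrix.one_mulVec, hx, hJ1]
      simp
    simp only [Sum.elim_inr, Sum.elim_comp_inl, Sum.elim_comp_inr, Pi.add_apply, Pi.smul_apply, smul_eq_mul, h1, h2]
    rw [hnp]; ring
end

section
/- In the k-to-k setup, suppose the second-smallest eigenvalue of the supra-Laplacian satisfies λ₂(Q) = 2kp. Then for every vector y ∈ {−1, +1}^{2n} with uᵀy = 0 (a balanced bipartition of the 2n nodes), the weight of the corresponding cut satisfies (1/4)·yᵀ Q y ≥ nkp, and equality holds for y = (u, −u), whose cut consists of exactly the interconnection links and has total weight nkp. That is, below the structural transition threshold the minimum balanced cut is obtained by cutting all interconnection links. -/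
open Matrix

lemma inner_eq_dot {ι : Type*} [Fintype ι] (a b : ι → ℝ) :
    (inner ℝ ((WithLp.equiv 2 (ι → ℝ)).symm a) ((WithLp.equiv 2 (ι → ℝ)).symm b) : ℝ)
      = a ⬝ᵥ b := by
  simp [PiLp.inner_apply, RCLike.inner_apply, dotProduct, mul_comm]

/-- Key spectral bound: if `Q u = 0`, `u ≠ 0`, `y ⊥ u` and the second smallest
eigenvalue of `Q` is `t > 0`, then `t‖y‖² ≤ yᵀQy`. -/
lemma spec_bound {ι : Type*} [Fintype ι] [DecidableEq ι]
    {Q : Matrix ι ι ℝ} (hQH : Q.IsHermitian)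
    (hcard : 2 ≤ Fintype.card ι)
    (u y : ι → ℝ) (hu : Q *ᵥ u = 0) (hune : u ⬝ᵥ u ≠ 0)
    (huy : u ⬝ᵥ y = 0) {t : ℝ} (ht : 0 < t)
    (hl : (sortedEigs hQH)[1]! = t) :
    t * (y ⬝ᵥ y) ≤ y ⬝ᵥ (Q *ᵥ y) := by
  classical
  set E := hQH.eigenvalues with hE
  set V := hQH.eigenvectorBasis with hV
  have hQT : Qᵀ = Q := by
    ext i j
    conv_rhs => rw [← hQH]
    simp [conjTranspose_apply]
  have hsym : ∀ (v w : ι → ℝ), (Q *ᵥ v) ⬝ᵥ w = v ⬝ᵥ (Q *ᵥ w) := by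
    intro v w
    rw [dotProduct_mulVec, ← mulVec_transpose, hQT, dotProduct_comm, dotProduct_mulVec,
      ← mulVec_transpose, hQT, dotProduct_comm]
  set d : ι → ℝ := fun i => ⇑(V i) ⬝ᵥ u with hd
  set c : ι → ℝ := fun i => ⇑(V i) ⬝ᵥ y with hc
  have hEig : ∀ i (w : ι → ℝ), ⇑(V i) ⬝ᵥ (Q *ᵥ w) = E i * (⇑(V i) ⬝ᵥ w) := by
    intro i w
    rw [← hsym, hQH.mulVec_eigenvectorBasis, smul_dotProduct, smul_eq_mul]
  have hEd : ∀ i, E i * d i = 0 := by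
    intro i
    rw [hd, ← hEig i u, hu, dotProduct_zero]
  have hsum : ∀ (v w : ι → ℝ), ∑ i, (⇑(V i) ⬝ᵥ v) * (⇑(V i) ⬝ᵥ w) = v ⬝ᵥ w := by
    intro v w
    have h := V.sum_inner_mul_inner ((WithLp.equiv 2 (ι → ℝ)).symm v)
      ((WithLp.equiv 2 (ι → ℝ)).symm w)
    rw [inner_eq_dot] at h
    rw [← h]
    refine Finset.sum_congr rfl fun i _ => ?_
    simp [PiLp.inner_apply, RCLike.inner_apply, dotProduct, mul_comm]
  have hsumd : ∑ i, d i * d i = u ⬝ᵥ u := hsum u u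
  have hsumdc : ∑ i, d i * c i = u ⬝ᵥ y := hsum u y
  have hsumc : ∑ i, c i * c i = y ⬝ᵥ y := hsum y y
  have hQy : y ⬝ᵥ (Q *ᵥ y) = ∑ i, E i * (c i * c i) := by
    rw [← hsum y (Q *ᵥ y)]
    refine Finset.sum_congr rfl fun i _ => ?_
    rw [hEig i y]
    ring
  have hlen : (sortedEigs hQH).length = Fintype.card ι := by
    simp [sortedEigs]
  obtain ⟨a, b, rest, hs⟩ : ∃ a b rest, sortedEigs hQH = a :: b :: rest := by
    rcases h : sortedEigs hQH with _ | ⟨a, _ | ⟨b, rest⟩⟩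
    · rw [h] at hlen; simp at hlen; omega
    · rw [h] at hlen; simp at hlen; omega
    · exact ⟨a, b, rest, rfl⟩
  have hb : b = t := by rw [hs] at hl; simpa using hl
  have hsorted : List.Pairwise (· ≤ ·) (sortedEigs hQH) := Multiset.pairwise_sort _ _
  rw [hs] at hsorted
  have hcount : (Finset.univ.filter (fun i => E i < t)).card ≤ 1 := by
    have h1 : ((Finset.univ.val.map E).filter (fun x => x < t)).card
        = (Finset.univ.filter (fun i => E i < t)).card := by
      rw [Multiset.filter_map]
      simp [Finset.card, Function.comp]
    have h2 : (Finset.univ.val.map E : Multiset ℝ) = ↑(sortedEigs hQH) :=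
      (Multiset.sort_eq _ _).symm
    rw [← h1, h2, hs]
    rw [Multiset.filter_coe]
    rw [Multiset.coe_card]
    have htail : (b :: rest).filter (fun x => decide (x < t)) = [] := by
      rw [List.filter_eq_nil_iff]
      intro x hx
      have hbx : b ≤ x := by
        rcases List.mem_cons.mp hx with h | h
        · exact h ▸ le_refl x
        · exact (List.pairwise_cons.mp hsorted.of_cons).1 x h
      simp only [decide_eq_true_eq, not_lt]
      rw [← hb]; exact hbx
    rw [List.filter_cons]
    by_cases hat : a < t
    · simp [hat, htail]
    · simp [hat, htail]
  have hex : ∃ i₀, d i₀ ≠ 0 := by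
    by_contra h
    push_neg at h
    apply hune
    rw [← hsumd]
    exact Finset.sum_eq_zero fun i _ => by rw [h i, mul_zero]
  obtain ⟨i₀, hi₀⟩ := hex
  have hEi₀ : E i₀ = 0 := by
    rcases mul_eq_zero.mp (hEd i₀) with h | h
    · exact h
    · exact absurd h hi₀
  have hmem₀ : i₀ ∈ Finset.univ.filter (fun i => E i < t) := by
    simp [hEi₀, ht]
  have huniq : ∀ i, E i < t → i = i₀ := by
    intro i hi
    have hmem : i ∈ Finset.univ.filter (fun j => E j < t) := by simp [hi]
    exact Finset.card_le_one.mp hcount i hmem i₀ hmem₀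
  have hge : ∀ i, i ≠ i₀ → t ≤ E i := by
    intro i hne
    by_contra h
    exact hne (huniq i (not_le.mp h))
  have hd0 : ∀ i, i ≠ i₀ → d i = 0 := by
    intro i hne
    rcases mul_eq_zero.mp (hEd i) with h | h
    · exact absurd (h ▸ hge i hne) (not_le.mpr ht)
    · exact h
  have hc0 : c i₀ = 0 := by
    have hsum0 : ∑ i, d i * c i = d i₀ * c i₀ := by
      apply Finset.sum_eq_single
      · intro i _ hne; rw [hd0 i hne, zero_mul]
      · intro h; exact absurd (Finset.mem_univ i₀) h
    have h0 : d i₀ * c i₀ = 0 := by rw [← hsum0, hsumdc, huy]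
    rcases mul_eq_zero.mp h0 with h | h
    · exact absurd h hi₀
    · exact h
  rw [hQy, ← hsumc, Finset.mul_sum]
  apply Finset.sum_le_sum
  intro i _
  by_cases hne : i = i₀
  · subst hne; rw [hc0]; simp
  · exact mul_le_mul_of_nonneg_right (hge i hne) (mul_self_nonneg _)

lemma dot_sum_elim {m : Type*} [Fintype m] (a b v w : m → ℝ) :
    (Sum.elim a b : m ⊕ m → ℝ) ⬝ᵥ (Sum.elim v w) = a ⬝ᵥ v + b ⬝ᵥ w := by
  simp [dotProduct, Fintype.sum_sum_type]

lemma bilin_expand {n : ℕ} (B : Matrix (Fin n) (Fin n) ℝ) (a b : Fin n → ℝ) :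
    a ⬝ᵥ (B *ᵥ b) = ∑ i, ∑ j, B i j * a i * b j := by
  simp only [dotProduct, mulVec, Finset.mul_sum]
  exact Finset.sum_congr rfl fun i _ => Finset.sum_congr rfl fun j _ => by ring

lemma sq_expand {n : ℕ} (B : Matrix (Fin n) (Fin n) ℝ) (c : ℝ)
    (hBrow : ∀ i, ∑ j, B i j = c) (hBcol : ∀ j, ∑ i, B i j = c) (a b : Fin n → ℝ) :
    ∑ i, ∑ j, B i j * (a i - b j)^2
      = c * (a ⬝ᵥ a) + c * (b ⬝ᵥ b) - 2 * ∑ i, ∑ j, B i j * a i * b j := by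
  have h1 : ∀ i j, B i j * (a i - b j)^2
      = B i j * (a i * a i) + B i j * (b j * b j) - 2 * (B i j * a i * b j) := by
    intro i j; ring
  have T1 : ∑ i, ∑ j, B i j * (a i * a i) = c * (a ⬝ᵥ a) := by
    rw [dotProduct, Finset.mul_sum]
    refine Finset.sum_congr rfl fun i _ => ?_
    rw [← Finset.sum_mul, hBrow]
  have T2 : ∑ i : Fin n, ∑ j, B i j * (b j * b j) = c * (b ⬝ᵥ b) := by
    rw [Finset.sum_comm, dotProduct, Finset.mul_sum]
    refine Finset.sum_congr rfl fun j _ => ?_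
    rw [← Finset.sum_mul, hBcol]
  have T3 : ∑ i, ∑ j, (2:ℝ) * (B i j * a i * b j) = 2 * ∑ i, ∑ j, B i j * a i * b j := by
    simp [Finset.mul_sum]
  simp only [h1, Finset.sum_sub_distrib, Finset.sum_add_distrib, T1, T2, T3]

lemma quad_id {n : ℕ} (c : ℝ) (Q₁ Q₂ B : Matrix (Fin n) (Fin n) ℝ)
    (hBrow : ∀ i, ∑ j, B i j = c) (hBcol : ∀ j, ∑ i, B i j = c)
    (x : Fin n ⊕ Fin n → ℝ) :
    x ⬝ᵥ ((Matrix.fromBlocks (Q₁ + c • 1) (-B) (-Bᵀ) (Q₂ + c • 1)) *ᵥ x) =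
      (fun i => x (Sum.inl i)) ⬝ᵥ (Q₁ *ᵥ fun i => x (Sum.inl i))
      + (fun i => x (Sum.inr i)) ⬝ᵥ (Q₂ *ᵥ fun i => x (Sum.inr i))
      + ∑ i, ∑ j, B i j * (x (Sum.inl i) - x (Sum.inr j))^2 := by
  set a := fun i => x (Sum.inl i) with ha
  set b := fun i => x (Sum.inr i) with hb
  have hx : x = Sum.elim a b := by funext i; cases i <;> rfl
  rw [hx]
  simp only [Sum.elim_inl, Sum.elim_inr]
  rw [Matrix.fromBlocks_mulVec, dot_sum_elim, sq_expand B c hBrow hBcol a b]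
  have hBt : b ⬝ᵥ (Bᵀ *ᵥ a) = a ⬝ᵥ (B *ᵥ b) := by
    rw [Matrix.mulVec_transpose, dotProduct_comm, ← Matrix.dotProduct_mulVec]
  have hBt2 : ∑ i, ∑ j, Bᵀ i j * b i * a j = ∑ i, ∑ j, B i j * a i * b j := by
    rw [← bilin_expand, ← bilin_expand, hBt]
  simp only [Matrix.add_mulVec, Matrix.neg_mulVec, Matrix.smul_mulVec,
    Matrix.one_mulVec, dotProduct_add, dotProduct_neg, dotProduct_smul, smul_eq_mul,
    Sum.elim_comp_inl, Sum.elim_comp_inr, bilin_expand, hBt2]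
  ring

/-- In the k-to-k setup, if `λ₂(Q) = 2kp`, then for every ±1 index vector
`y` with `uᵀy = 0` (a balanced bipartition of the `2n` nodes), the cut weight satisfies
`(1/4)·yᵀQy ≥ nkp`, and equality holds for `y = (u, −u)`, whose cut consists of exactly
the interconnection links, of total weight `nkp`: below the structural transition
threshold the minimum balanced cut is obtained by cutting all interconnection links. -/
theorem stmt_18
    (n k : ℕ) (p : ℝ) (hn : 1 ≤ n) (hk : 1 ≤ k) (hkn : k ≤ n) (hp : 0 ≤ p)
    (Q₁ Q₂ B : Matrix (Fin n) (Fin n) ℝ)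
    (hQ₁ : Q₁.PosSemidef) (hQ₂ : Q₂.PosSemidef)
    (hQ₁u : Q₁ *ᵥ (fun _ => (1:ℝ)) = 0) (hQ₂u : Q₂ *ᵥ (fun _ => (1:ℝ)) = 0)
    (hB0 : ∀ i j, 0 ≤ B i j)
    (hBrow : ∀ i, ∑ j, B i j = (k:ℝ) * p) (hBcol : ∀ j, ∑ i, B i j = (k:ℝ) * p)
    (Q : Matrix (Fin n ⊕ Fin n) (Fin n ⊕ Fin n) ℝ)
    (hQdef : Q = Matrix.fromBlocks (Q₁ + ((k:ℝ) * p) • 1) (-B)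
      (-Bᵀ) (Q₂ + ((k:ℝ) * p) • 1))
    (hQH : Q.IsHermitian)
    (hl2 : (sortedEigs hQH)[1]! = 2 * (k:ℝ) * p) :
    (∀ y : Fin n ⊕ Fin n → ℝ, (∀ i, y i = 1 ∨ y i = -1) →
        y ⬝ᵥ (Sum.elim (fun _ => (1:ℝ)) (fun _ => (1:ℝ))) = 0 →
        (n:ℝ) * k * p ≤ (1 / 4) * (y ⬝ᵥ (Q *ᵥ y))) ∧
      (1 / 4) * ((Sum.elim (fun _ => (1:ℝ)) (fun _ => (-1:ℝ))) ⬝ᵥ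
        (Q *ᵥ (Sum.elim (fun _ => (1:ℝ)) (fun _ => (-1:ℝ))))) = (n:ℝ) * k * p := by
  have hquad : ∀ x : Fin n ⊕ Fin n → ℝ, x ⬝ᵥ (Q *ᵥ x) =
      (fun i => x (Sum.inl i)) ⬝ᵥ (Q₁ *ᵥ fun i => x (Sum.inl i))
      + (fun i => x (Sum.inr i)) ⬝ᵥ (Q₂ *ᵥ fun i => x (Sum.inr i))
      + ∑ i, ∑ j, B i j * (x (Sum.inl i) - x (Sum.inr j))^2 := by
    intro x; rw [hQdef]; exact quad_id _ Q₁ Q₂ B hBrow hBcol x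
  constructor
  · intro y hy hyu
    have hyy : y ⬝ᵥ y = (n:ℝ) + n := by
      have h1 : ∀ i, y i * y i = 1 := fun i => by rcases hy i with h | h <;> rw [h] <;> ring
      simp [dotProduct, h1]
    rcases eq_or_lt_of_le hp with hp0 | hp0
    · -- p = 0 : the quadratic form is nonnegative
      have hz : (n:ℝ) * k * p = 0 := by rw [← hp0]; ring
      rw [hz]
      have hge := hquad y
      have h1 : 0 ≤ (fun i => y (Sum.inl i)) ⬝ᵥ (Q₁ *ᵥ fun i => y (Sum.inl i)) := by
        have := hQ₁.dotProduct_mulVec_nonneg (fun i => y (Sum.inl i)); simpa using this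
      have h2 : 0 ≤ (fun i => y (Sum.inr i)) ⬝ᵥ (Q₂ *ᵥ fun i => y (Sum.inr i)) := by
        have := hQ₂.dotProduct_mulVec_nonneg (fun i => y (Sum.inr i)); simpa using this
      have h3 : 0 ≤ ∑ i, ∑ j, B i j * (y (Sum.inl i) - y (Sum.inr j))^2 := by
        refine Finset.sum_nonneg fun i _ => Finset.sum_nonneg fun j _ => ?_
        exact mul_nonneg (hB0 i j) (sq_nonneg _)
      linarith
    · -- p > 0 : spectral argument
      have hk1 : (1:ℝ) ≤ (k:ℝ) := by exact_mod_cast hk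
      have ht : 0 < 2 * (k:ℝ) * p := by nlinarith
      have hcard : 2 ≤ Fintype.card (Fin n ⊕ Fin n) := by
        simp only [Fintype.card_sum, Fintype.card_fin]; omega
      have hBone : B *ᵥ (fun _ => (1:ℝ)) = fun _ => (k:ℝ) * p := by
        funext i
        simp only [mulVec, dotProduct, mul_one]
        exact hBrow i
      have hu : Q *ᵥ (Sum.elim (fun _ => (1:ℝ)) (fun _ => (1:ℝ))) = 0 := by
        rw [hQdef, Matrix.fromBlocks_mulVec]
        have hBtone : Bᵀ *ᵥ (fun _ => (1:ℝ)) = fun _ => (k:ℝ) * p := by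
          funext j
          simp only [mulVec, dotProduct, transpose_apply, mul_one]
          exact hBcol j
        funext i
        cases i with
        | inl i =>
          simp [Matrix.add_mulVec, Matrix.neg_mulVec, Matrix.smul_mulVec,
            Matrix.one_mulVec, Function.comp_def, hQ₁u, hBone]
        | inr i =>
          simp [Matrix.add_mulVec, Matrix.neg_mulVec, Matrix.smul_mulVec,
            Matrix.one_mulVec, Function.comp_def, hQ₂u, hBtone]
      have hune : (Sum.elim (fun _ => (1:ℝ)) (fun _ => (1:ℝ)) : Fin n ⊕ Fin n → ℝ) ⬝ᵥ
          (Sum.elim (fun _ => (1:ℝ)) (fun _ => (1:ℝ))) ≠ 0 := by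
        rw [dot_sum_elim]
        have : ((fun _ => (1:ℝ)) : Fin n → ℝ) ⬝ᵥ (fun _ => (1:ℝ)) = (n:ℝ) := by
          simp [dotProduct]
        rw [this]
        have hn1 : (1:ℝ) ≤ (n:ℝ) := by exact_mod_cast hn
        nlinarith
      have huy : (Sum.elim (fun _ => (1:ℝ)) (fun _ => (1:ℝ)) : Fin n ⊕ Fin n → ℝ) ⬝ᵥ y = 0 := by
        rw [dotProduct_comm]; exact hyu
      have hb := spec_bound hQH hcard _ y hu hune huy ht hl2
      rw [hyy] at hb
      have h4 : 2 * (k:ℝ) * p * ((n:ℝ) + (n:ℝ)) = 4 * ((n:ℝ) * k * p) := by ring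
      linarith
  · -- equality for y = (u, -u)
    rw [hquad]
    simp only [Sum.elim_inl, Sum.elim_inr]
    have e1 : ((fun _ => (1:ℝ)) : Fin n → ℝ) ⬝ᵥ (Q₁ *ᵥ fun _ => (1:ℝ)) = 0 := by
      rw [hQ₁u, dotProduct_zero]
    have e2 : ((fun _ => (-1:ℝ)) : Fin n → ℝ) ⬝ᵥ (Q₂ *ᵥ fun _ => (-1:ℝ)) = 0 := by
      have hneg : ((fun _ => (-1:ℝ)) : Fin n → ℝ) = -(fun _ => (1:ℝ)) := rfl
      rw [hneg, Matrix.mulVec_neg, hQ₂u, neg_zero, dotProduct_zero]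
    have e3 : ∑ i, ∑ j, B i j * ((1:ℝ) - (-1))^2 = (n:ℝ) * (4 * ((k:ℝ) * p)) := by
      have : ∀ i : Fin n, ∑ j, B i j * ((1:ℝ) - (-1))^2 = 4 * ((k:ℝ) * p) := by
        intro i
        have h4 : ((1:ℝ) - (-1))^2 = 4 := by norm_num
        simp only [h4]
        rw [← Finset.sum_mul, hBrow]
        ring
      simp only [this, Finset.sum_const, Finset.card_univ, Fintype.card_fin, nsmul_eq_mul]
    rw [e1, e2, e3]
    ring
end
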